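/- arXiv:0811.2042 — 5 statements merged into one kernel-verified Lean document; each statement's English description precedes it below -/
import Mathlib

section
/- Let 𝒮 be a finite set, let P be an irreducible row-stochastic matrix indexed by 𝒮 (irreducible meaning: for all i,j ∈ 𝒮 there is n ≥ 0 with (P^n)_{ij} > 0), and let π be a stationary probability distribution for P (πP = π). Let S ⊆ 𝒮 be nonempty and T = 𝒮 ∖ S. Then: (i) the matrix series N = Σ_{k=0}^∞ (P_{TT})^k converges, where P_{TT} is the block of P with both indices in T; (ii) the matrix Q = P_{SS} + P_{ST} N P_{TS} on S (the transition matrix of the chain obtained by observing the original chain only when it visits S) is row-stochastic and irreducible; and (iii) the probability distribution π̄ on S defined by π̄_s = π_s / Σ_{s'∈S} π_{s'} satisfies π̄ Q = π̄. -/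
/-
`P_TT` is substochastic, and since `P` is irreducible and `S` is nonempty, every state of `T`
leaks mass into `S` within some number of steps. Leaked mass never returns, so one power
`P_TT ^ M` has all row sums `< 1`, i.e. `ℓ∞` operator norm `< 1`, and the geometric series
converges. Its sum `N` is a two-sided inverse of `1 - P_TT`; with it, `Q 1 = 1` and
`π_S Q = π_S` are block computations from `P 1 = 1` and `π P = π`.

For irreducibility, a path of positive entries of `P` between two states of `S` splits at its
visits to `S` into excursions through `T`, and each excursion gives a positive entry of `Q`.
-/

attribute [local instance] Classical.propDecidable

/-- The block of the matrix `P` with row indices in `S` and column indices in `T`. -/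
noncomputable def subM {𝒮 : Type*} (P : Matrix 𝒮 𝒮 ℝ) (S T : Finset 𝒮) :
    Matrix {x // x ∈ S} {x // x ∈ T} ℝ :=
  fun i j => P i.1 j.1

/-- `N = Σ_{k=0}^∞ (P_{TT})^k`, where `T = 𝒮 ∖ S` (the sum taken entrywise). -/
noncomputable def Nmat {𝒮 : Type*} [Fintype 𝒮] [DecidableEq 𝒮] (P : Matrix 𝒮 𝒮 ℝ)
    (S : Finset 𝒮) : Matrix {x // x ∈ Sᶜ} {x // x ∈ Sᶜ} ℝ :=
  fun i j => ∑' k : ℕ, (subM P Sᶜ Sᶜ ^ k) i j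

/-- `Q = P_{SS} + P_{ST} N P_{TS}`: the transition matrix of the chain obtained by observing
the original chain only when it visits `S`. -/
noncomputable def Qmat {𝒮 : Type*} [Fintype 𝒮] [DecidableEq 𝒮] (P : Matrix 𝒮 𝒮 ℝ)
    (S : Finset 𝒮) : Matrix {x // x ∈ S} {x // x ∈ S} ℝ :=
  subM P S S + subM P S Sᶜ * Nmat P S * subM P Sᶜ S

open Finset Matrix Relation

theorem summable_norm_pow_of_norm_pow_lt_one {R : Type*} [NormedRing R] {x : R} {M : ℕ}
    (hM : 0 < M) (hx : ‖x ^ M‖ < 1) : Summable fun n => ‖x ^ n‖ := by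
  have : NeZero M := ⟨hM.ne'⟩
  rw [← (Nat.divModEquiv M).symm.summable_iff]
  refine ((summable_geometric_of_lt_one (norm_nonneg _) hx).mul_of_nonneg
      (Summable.of_finite (f := fun r : Fin M => ‖x ^ (r : ℕ)‖)) (fun _ => by positivity)
      (fun _ => norm_nonneg _)).of_nonneg_of_le (fun _ => norm_nonneg _) ?_
  -- index `n` as `q * M + r`, so that `x ^ n = (x ^ M) ^ q * x ^ r`
  rintro ⟨q, r⟩
  simp only [Function.comp_apply, Nat.divModEquiv_symm_apply]
  rw [pow_add, mul_comm q M, pow_mul]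
  rcases q.eq_zero_or_pos with rfl | hq
  · simp
  · exact (norm_mul_le _ _).trans
      (mul_le_mul_of_nonneg_right (norm_pow_le' _ hq) (norm_nonneg _))

namespace Matrix

variable {ι : Type*} [Fintype ι] {A B : Matrix ι ι ℝ}

lemma sum_mul_apply_le (hA : ∀ i j, 0 ≤ A i j) (hB : ∀ i, ∑ j, B i j ≤ 1) (i : ι) :
    ∑ j, (A * B) i j ≤ ∑ j, A i j := by
  simp_rw [mul_apply]
  rw [sum_comm]
  simp_rw [← mul_sum]
  exact sum_le_sum fun u _ => mul_le_of_le_one_right (hA i u) (hB u)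

lemma sum_pow_apply_le_one [DecidableEq ι] (hA : ∀ i j, 0 ≤ A i j) (hA1 : ∀ i, ∑ j, A i j ≤ 1)
    (k : ℕ) (i : ι) : ∑ j, (A ^ k) i j ≤ 1 := by
  induction k generalizing i with
  | zero => simp [one_apply]
  | succ k ih =>
    rw [pow_succ]
    exact (sum_mul_apply_le (pow_apply_nonneg hA k) hA1 i).trans (ih i)

attribute [local instance] Matrix.linftyOpNormedRing Matrix.linftyOpNormedAlgebra in
theorem summable_pow_of_exists_sum_pow_lt_one [DecidableEq ι] (hA : ∀ i j, 0 ≤ A i j)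
    (hA1 : ∀ i, ∑ j, A i j ≤ 1) (hleak : ∀ i, ∃ k, ∑ j, (A ^ k) i j < 1) :
    Summable (A ^ ·) := by
  choose k hk using hleak
  set M := univ.sup k + 1
  have hM : ∀ i, ∑ j, (A ^ M) i j < 1 := fun i => by
    have : M = k i + (M - k i) := by have := le_sup (f := k) (mem_univ i); omega
    rw [this, pow_add]
    exact (sum_mul_apply_le (pow_apply_nonneg hA _) (sum_pow_apply_le_one hA hA1 _) i).trans_lt
      (hk i)
  -- for a nonnegative matrix the `ℓ∞` operator norm is the largest row sum
  have hnorm : ‖A ^ M‖ < 1 := by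
    rw [linfty_opNorm_def, ← NNReal.coe_one, NNReal.coe_lt_coe,
      Finset.sup_lt_iff zero_lt_one]
    intro i _
    rw [← NNReal.coe_lt_coe]
    push_cast
    simpa [Real.norm_of_nonneg (pow_apply_nonneg hA M i _)] using hM i
  have : CompleteSpace (Matrix ι ι ℝ) := FiniteDimensional.complete ℝ _
  exact (summable_norm_pow_of_norm_pow_lt_one (Nat.succ_pos _) hnorm).of_norm

theorem exists_pow_apply_pos_iff_reflTransGen [DecidableEq ι] (hA : ∀ i j, 0 ≤ A i j)
    {i j : ι} : (∃ k, 0 < (A ^ k) i j) ↔ ReflTransGen (fun a b => 0 < A a b) i j := by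
  let := toQuiver A
  simp_rw [pow_apply_pos_iff_nonempty_path hA]
  constructor
  · rintro ⟨k, ⟨p, -⟩⟩
    induction p with
    | nil => exact .refl
    | cons _ e ih => exact ih.tail e.down
  · intro h
    induction h with
    | refl => exact ⟨0, ⟨.nil, rfl⟩⟩
    | tail _ hbc ih =>
      obtain ⟨k, ⟨p, hp⟩⟩ := ih
      exact ⟨k + 1, ⟨p.cons ⟨hbc⟩, by simp [hp]⟩⟩

end Matrix

section TraceRelation

variable {α : Type*} (r : α → α → Prop) (p : α → Prop)

/-- The transition relation of the chain observed only on `p`: one `r`-step, followed by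
`r`-steps that all start outside `p`. -/
def traceRel (a b : {x // p x}) : Prop :=
  ∃ u, r a u ∧ ReflTransGen (fun c d => ¬ p c ∧ r c d) u b

variable {r p}

lemma eq_of_reflTransGen_avoiding {u b : α} (h : ReflTransGen (fun c d => ¬ p c ∧ r c d) u b)
    (hu : p u) : u = b := by
  rcases h.cases_head with h | ⟨_, ⟨hnu, _⟩, _⟩
  · exact h
  · exact absurd hu hnu

theorem reflTransGen_traceRel {x y : {x // p x}} (h : ReflTransGen r x y) :
    ReflTransGen (traceRel r p) x y := by
  suffices ∀ z, ReflTransGen r z y → ∃ a : {x // p x},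
      ReflTransGen (fun c d => ¬ p c ∧ r c d) z a ∧ ReflTransGen (traceRel r p) a y by
    obtain ⟨a, hxa, hay⟩ := this x h
    rwa [Subtype.ext (eq_of_reflTransGen_avoiding hxa x.2)]
  intro z hzy
  induction hzy using ReflTransGen.head_induction_on with
  | refl => exact ⟨y, .refl, .refl⟩
  | @head z w hzw _ ih =>
    obtain ⟨a, hwa, hay⟩ := ih
    by_cases hz : p z
    · exact ⟨⟨_, hz⟩, .refl, .head ⟨_, hzw, hwa⟩ hay⟩
    · exact ⟨a, .head ⟨hz, hzw⟩ hwa, hay⟩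

end TraceRelation

section ObservedChain

variable {𝒮 : Type*} [Fintype 𝒮] [DecidableEq 𝒮]

lemma subM_mulVec_add_subM_compl_mulVec (P : Matrix 𝒮 𝒮 ℝ) (U S : Finset 𝒮) (v : 𝒮 → ℝ) :
    subM P U S *ᵥ (v ∘ (↑)) + subM P U Sᶜ *ᵥ (v ∘ (↑)) = (P *ᵥ v) ∘ (↑) := by
  ext i
  simp only [Pi.add_apply, Function.comp_apply, mulVec, dotProduct, subM]
  rw [sum_coe_sort S (fun j => P i j * v j), sum_coe_sort Sᶜ (fun j => P i j * v j),
    sum_add_sum_compl]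

lemma vecMul_subM_add_vecMul_subM_compl (P : Matrix 𝒮 𝒮 ℝ) (S U : Finset 𝒮) (w : 𝒮 → ℝ) :
    (w ∘ (↑)) ᵥ* subM P S U + (w ∘ (↑)) ᵥ* subM P Sᶜ U = (w ᵥ* P) ∘ (↑) := by
  ext j
  simp only [Pi.add_apply, Function.comp_apply, vecMul, dotProduct, subM]
  rw [sum_coe_sort S (fun i => w i * P i j), sum_coe_sort Sᶜ (fun i => w i * P i j),
    sum_add_sum_compl]

variable {P : Matrix 𝒮 𝒮 ℝ} {S : Finset 𝒮}

lemma pow_subM_apply_le (hnn : ∀ i j, 0 ≤ P i j) (U : Finset 𝒮) (k : ℕ) (i j : U) :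
    (subM P U U ^ k) i j ≤ (P ^ k) i j := by
  induction k generalizing j with
  | zero =>
    rcases eq_or_ne i j with rfl | h
    · simp
    · simp [one_apply, h, Subtype.val_injective.ne h]
  | succ k ih =>
    rw [pow_succ, pow_succ, mul_apply, mul_apply]
    calc ∑ u : U, (subM P U U ^ k) i u * P u j ≤ ∑ u : U, (P ^ k) i u * P u j :=
          sum_le_sum fun u _ => mul_le_mul_of_nonneg_right (ih u) (hnn _ _)
      _ = ∑ u ∈ U, (P ^ k) i u * P u j := sum_coe_sort U (fun u => (P ^ k) i u * P u j)
      _ ≤ ∑ u, (P ^ k) i u * P u j := sum_le_sum_of_subset_of_nonneg (subset_univ _)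
          fun u _ _ => mul_nonneg (pow_apply_nonneg hnn k _ _) (hnn _ _)

lemma exists_sum_pow_subM_compl_lt_one (hP : P ∈ rowStochastic ℝ 𝒮)
    (hirr : ∀ i j, ∃ k : ℕ, 0 < (P ^ k) i j) (hS : S.Nonempty) (t : {x // x ∈ Sᶜ}) :
    ∃ k, ∑ j, (subM P Sᶜ Sᶜ ^ k) t j < 1 := by
  obtain ⟨s, hs⟩ := hS
  obtain ⟨k, hk⟩ := hirr t s
  have hPk := pow_mem hP k
  refine ⟨k, ?_⟩
  calc ∑ j, (subM P Sᶜ Sᶜ ^ k) t j ≤ ∑ j : {x // x ∈ Sᶜ}, (P ^ k) t j :=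
        sum_le_sum fun j _ =>
          pow_subM_apply_le (fun _ _ => nonneg_of_mem_rowStochastic hP) _ k t j
    _ = ∑ j ∈ Sᶜ, (P ^ k) t j := sum_coe_sort Sᶜ (fun j => (P ^ k) t j)
    _ < ∑ j, (P ^ k) t j := sum_lt_sum_of_subset (subset_univ _) (mem_univ s)
        (by simpa using hs) hk fun _ _ _ => nonneg_of_mem_rowStochastic hPk
    _ = 1 := sum_row_of_mem_rowStochastic hPk t

theorem summable_pow_subM_compl (hP : P ∈ rowStochastic ℝ 𝒮)
    (hirr : ∀ i j, ∃ k : ℕ, 0 < (P ^ k) i j) (hS : S.Nonempty) :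
    Summable (subM P Sᶜ Sᶜ ^ ·) := by
  refine summable_pow_of_exists_sum_pow_lt_one (fun _ _ => nonneg_of_mem_rowStochastic hP)
    (fun t => ?_) (exists_sum_pow_subM_compl_lt_one hP hirr hS)
  calc ∑ j, subM P Sᶜ Sᶜ t j = ∑ j ∈ Sᶜ, P t j := sum_coe_sort Sᶜ (fun j => P t j)
    _ ≤ ∑ j, P t j := sum_le_sum_of_subset_of_nonneg (subset_univ _)
        fun _ _ _ => nonneg_of_mem_rowStochastic hP
    _ = 1 := sum_row_of_mem_rowStochastic hP t

lemma Nmat_eq_tsum (hsum : Summable (subM P Sᶜ Sᶜ ^ ·)) :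
    Nmat P S = ∑' k, subM P Sᶜ Sᶜ ^ k := by
  ext i j
  exact (Pi.hasSum.1 (Pi.hasSum.1 hsum.hasSum i) j).tsum_eq

lemma one_sub_mul_Nmat (hsum : Summable (subM P Sᶜ Sᶜ ^ ·)) :
    (1 - subM P Sᶜ Sᶜ) * Nmat P S = 1 := by
  rw [Nmat_eq_tsum hsum]
  exact hsum.one_sub_mul_tsum_pow

lemma Nmat_mul_one_sub (hsum : Summable (subM P Sᶜ Sᶜ ^ ·)) :
    Nmat P S * (1 - subM P Sᶜ Sᶜ) = 1 := by
  rw [Nmat_eq_tsum hsum]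
  exact hsum.tsum_pow_mul_one_sub

lemma Nmat_apply_nonneg (hnn : ∀ i j, 0 ≤ P i j) (i j : {x // x ∈ Sᶜ}) :
    0 ≤ Nmat P S i j :=
  tsum_nonneg fun k => pow_apply_nonneg (fun _ _ => hnn _ _) k i j

lemma Nmat_mul_subM_apply_nonneg (hnn : ∀ i j, 0 ≤ P i j) (t : {x // x ∈ Sᶜ})
    (b : {x // x ∈ S}) : 0 ≤ (Nmat P S * subM P Sᶜ S) t b :=
  sum_nonneg fun _ _ => mul_nonneg (Nmat_apply_nonneg hnn _ _) (hnn _ _)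

lemma subM_mul_Nmat_mul_subM_apply_nonneg (hnn : ∀ i j, 0 ≤ P i j) (a b : {x // x ∈ S}) :
    0 ≤ (subM P S Sᶜ * Nmat P S * subM P Sᶜ S) a b := by
  rw [Matrix.mul_assoc]
  exact sum_nonneg fun _ _ => mul_nonneg (hnn _ _) (Nmat_mul_subM_apply_nonneg hnn _ _)

lemma pow_apply_le_Nmat (hnn : ∀ i j, 0 ≤ P i j) (hsum : Summable (subM P Sᶜ Sᶜ ^ ·))
    (k : ℕ) (i j : {x // x ∈ Sᶜ}) : (subM P Sᶜ Sᶜ ^ k) i j ≤ Nmat P S i j :=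
  (Pi.summable.1 (Pi.summable.1 hsum i) j).le_tsum k fun _ _ =>
    pow_apply_nonneg (fun _ _ => hnn _ _) _ i j

lemma Qmat_mem_rowStochastic (hP : P ∈ rowStochastic ℝ 𝒮)
    (hsum : Summable (subM P Sᶜ Sᶜ ^ ·)) : Qmat P S ∈ rowStochastic ℝ S := by
  have hnn : ∀ i j, 0 ≤ P i j := fun _ _ => nonneg_of_mem_rowStochastic hP
  have hrows (U : Finset 𝒮) : subM P U S *ᵥ 1 + subM P U Sᶜ *ᵥ 1 = 1 := by
    simpa [one_vecMul_of_mem_rowStochastic hP] using subM_mulVec_add_subM_compl_mulVec P U S 1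
  have hTS : subM P Sᶜ S *ᵥ 1 = (1 - subM P Sᶜ Sᶜ) *ᵥ 1 := by
    rw [sub_mulVec, one_mulVec, eq_sub_iff_add_eq, hrows]
  refine ⟨fun i j => add_nonneg (hnn _ _) (subM_mul_Nmat_mul_subM_apply_nonneg hnn i j), ?_⟩
  calc Qmat P S *ᵥ 1
      = subM P S S *ᵥ 1 + subM P S Sᶜ *ᵥ (Nmat P S *ᵥ (subM P Sᶜ S *ᵥ 1)) := by
        simp only [Qmat, add_mulVec, mulVec_mulVec, Matrix.mul_assoc]
    _ = subM P S S *ᵥ 1 + subM P S Sᶜ *ᵥ 1 := by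
        rw [hTS, mulVec_mulVec _ (Nmat P S), Nmat_mul_one_sub hsum, one_mulVec]
    _ = 1 := hrows S

lemma vecMul_Qmat {π : 𝒮 → ℝ} (hπ : π ᵥ* P = π) (hsum : Summable (subM P Sᶜ Sᶜ ^ ·)) :
    (π ∘ (↑)) ᵥ* Qmat P S = π ∘ (↑) := by
  have hST : (π ∘ (↑)) ᵥ* subM P S Sᶜ = (π ∘ (↑)) ᵥ* (1 - subM P Sᶜ Sᶜ) := by
    rw [vecMul_sub, vecMul_one, eq_sub_iff_add_eq, vecMul_subM_add_vecMul_subM_compl, hπ]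
  calc (π ∘ (↑)) ᵥ* Qmat P S
      = (π ∘ (↑)) ᵥ* subM P S S
          + (π ∘ (↑)) ᵥ* subM P S Sᶜ ᵥ* Nmat P S ᵥ* subM P Sᶜ S := by
        simp only [Qmat, vecMul_add, vecMul_vecMul]
    _ = (π ∘ (↑)) ᵥ* subM P S S + (π ∘ (↑)) ᵥ* subM P Sᶜ S := by
        rw [hST, vecMul_vecMul _ _ (Nmat P S), one_sub_mul_Nmat hsum, vecMul_one]
    _ = π ∘ (↑) := by rw [vecMul_subM_add_vecMul_subM_compl, hπ]

lemma exists_pow_mul_subM_apply_pos (hnn : ∀ i j, 0 ≤ P i j) {b : {x // x ∈ S}} {x : 𝒮}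
    (hx : x ∉ S) (h : ReflTransGen (fun c d => c ∉ S ∧ 0 < P c d) x b) :
    ∃ k : ℕ, 0 < (subM P Sᶜ Sᶜ ^ k * subM P Sᶜ S) ⟨x, mem_compl.2 hx⟩ b := by
  induction h using ReflTransGen.head_induction_on with
  | refl => exact absurd b.2 hx
  | @head x w hxw hwb ih =>
    by_cases hw : w ∈ S
    · obtain rfl := eq_of_reflTransGen_avoiding hwb hw
      exact ⟨0, by simpa [subM] using hxw.2⟩
    · obtain ⟨k, hk⟩ := ih hw
      refine ⟨k + 1, ?_⟩
      rw [pow_succ', Matrix.mul_assoc, mul_apply]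
      refine sum_pos' (fun _ _ => mul_nonneg (hnn _ _) ?_)
        ⟨⟨w, mem_compl.2 hw⟩, mem_univ _, mul_pos hxw.2 hk⟩
      exact sum_nonneg fun _ _ =>
        mul_nonneg (pow_apply_nonneg (fun _ _ => hnn _ _) k _ _) (hnn _ _)

lemma Qmat_apply_pos_of_traceRel (hnn : ∀ i j, 0 ≤ P i j)
    (hsum : Summable (subM P Sᶜ Sᶜ ^ ·)) {a b : {x // x ∈ S}}
    (h : traceRel (fun x y => 0 < P x y) (· ∈ S) a b) :
    0 < Qmat P S a b := by
  obtain ⟨u, hau, hub⟩ := h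
  rw [Qmat, Matrix.add_apply]
  by_cases hu : u ∈ S
  · obtain rfl := eq_of_reflTransGen_avoiding hub hu
    exact add_pos_of_pos_of_nonneg hau (subM_mul_Nmat_mul_subM_apply_nonneg hnn a b)
  · obtain ⟨k, hk⟩ := exists_pow_mul_subM_apply_pos hnn hu hub
    have hNk : (subM P Sᶜ Sᶜ ^ k * subM P Sᶜ S) ⟨u, mem_compl.2 hu⟩ b
        ≤ (Nmat P S * subM P Sᶜ S) ⟨u, mem_compl.2 hu⟩ b :=
      sum_le_sum fun _ _ =>
        mul_le_mul_of_nonneg_right (pow_apply_le_Nmat hnn hsum k _ _) (hnn _ _)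
    refine add_pos_of_nonneg_of_pos (hnn _ _) ?_
    rw [Matrix.mul_assoc, mul_apply]
    exact sum_pos' (fun _ _ => mul_nonneg (hnn _ _) (Nmat_mul_subM_apply_nonneg hnn _ _))
      ⟨⟨u, mem_compl.2 hu⟩, mem_univ _, mul_pos hau (hk.trans_le hNk)⟩

theorem Qmat_exists_pow_apply_pos (hP : P ∈ rowStochastic ℝ 𝒮)
    (hirr : ∀ i j, ∃ k : ℕ, 0 < (P ^ k) i j) (hsum : Summable (subM P Sᶜ Sᶜ ^ ·))
    (i j : {x // x ∈ S}) : ∃ k, 0 < (Qmat P S ^ k) i j := by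
  have hnn : ∀ i j, 0 ≤ P i j := fun _ _ => nonneg_of_mem_rowStochastic hP
  rw [exists_pow_apply_pos_iff_reflTransGen fun _ _ =>
    nonneg_of_mem_rowStochastic (Qmat_mem_rowStochastic hP hsum)]
  exact ReflTransGen.mono (fun _ _ => Qmat_apply_pos_of_traceRel hnn hsum) _ _
    (reflTransGen_traceRel ((exists_pow_apply_pos_iff_reflTransGen hnn).1 (hirr i j)))

end ObservedChain

theorem observed_chain_general {𝒮 : Type*} [Fintype 𝒮] [DecidableEq 𝒮]
    (P : Matrix 𝒮 𝒮 ℝ)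
    (hnn : ∀ i j, 0 ≤ P i j) (hrow : ∀ i, ∑ j, P i j = 1)
    (hirr : ∀ i j, ∃ k : ℕ, 0 < (P ^ k) i j)
    (π : 𝒮 → ℝ)
    (hstat : ∀ j, ∑ i, π i * P i j = π j)
    (S : Finset 𝒮) (hS : S.Nonempty) :
    -- (i) the matrix series `N = Σ_k (P_{TT})^k` converges (entrywise)
    (∀ i j : {x // x ∈ Sᶜ}, Summable fun k : ℕ => (subM P Sᶜ Sᶜ ^ k) i j) ∧
    -- (ii) `Q` is row-stochastic and irreducible
    (∀ i j : {x // x ∈ S}, 0 ≤ Qmat P S i j) ∧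
    (∀ i : {x // x ∈ S}, ∑ j : {x // x ∈ S}, Qmat P S i j = 1) ∧
    (∀ i j : {x // x ∈ S}, ∃ k : ℕ, 0 < (Qmat P S ^ k) i j) ∧
    -- (iii) `π̄ Q = π̄` where `π̄_s = π_s / Σ_{s' ∈ S} π_{s'}`
    (∀ j : {x // x ∈ S}, ∑ i : {x // x ∈ S},
        (π i.1 / ∑ s' ∈ S, π s') * Qmat P S i j = π j.1 / ∑ s' ∈ S, π s') := by
  have hP : P ∈ rowStochastic ℝ 𝒮 := mem_rowStochastic_iff_sum.2 ⟨hnn, hrow⟩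
  have hsum := summable_pow_subM_compl hP hirr hS
  obtain ⟨hQnn, hQrow⟩ := mem_rowStochastic_iff_sum.1 (Qmat_mem_rowStochastic hP hsum)
  refine ⟨fun i j => Pi.summable.1 (Pi.summable.1 hsum i) j, hQnn, hQrow,
    Qmat_exists_pow_apply_pos hP hirr hsum, fun j => ?_⟩
  have hπQ : ∑ i : {x // x ∈ S}, π i * Qmat P S i j = π j :=
    congrFun (vecMul_Qmat (funext hstat) hsum) j
  simp_rw [div_mul_eq_mul_div, ← sum_div, hπQ]

theorem observed_chain {𝒮 : Type*} [Fintype 𝒮] [DecidableEq 𝒮]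
    (P : Matrix 𝒮 𝒮 ℝ)
    (hnn : ∀ i j, 0 ≤ P i j) (hrow : ∀ i, ∑ j, P i j = 1)
    (hirr : ∀ i j, ∃ k : ℕ, 0 < (P ^ k) i j)
    (π : 𝒮 → ℝ) (hπ0 : ∀ i, 0 ≤ π i) (hπ1 : ∑ i, π i = 1)
    (hstat : ∀ j, ∑ i, π i * P i j = π j)
    (S : Finset 𝒮) (hS : S.Nonempty) :
    -- (i) the matrix series `N = Σ_k (P_{TT})^k` converges (entrywise)
    (∀ i j : {x // x ∈ Sᶜ}, Summable fun k : ℕ => (subM P Sᶜ Sᶜ ^ k) i j) ∧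
    -- (ii) `Q` is row-stochastic and irreducible
    (∀ i j : {x // x ∈ S}, 0 ≤ Qmat P S i j) ∧
    (∀ i : {x // x ∈ S}, ∑ j : {x // x ∈ S}, Qmat P S i j = 1) ∧
    (∀ i j : {x // x ∈ S}, ∃ k : ℕ, 0 < (Qmat P S ^ k) i j) ∧
    -- (iii) `π̄ Q = π̄` where `π̄_s = π_s / Σ_{s' ∈ S} π_{s'}`
    (∀ j : {x // x ∈ S}, ∑ i : {x // x ∈ S},
        (π i.1 / ∑ s' ∈ S, π s') * Qmat P S i j = π j.1 / ∑ s' ∈ S, π s') :=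
  observed_chain_general P hnn hrow hirr π hstat S hS
end

section
/- For every finite simple graph G with vertex set V and edge set E and every real β, the Ising partition function admits the high-temperature expansion Σ_{σ : V → {−1,+1}} exp(β Σ_{ij ∈ E} σ_i σ_j) = 2^{|V|} (cosh β)^{|E|} Σ_{A ∈ 𝒞(G)} (tanh β)^{|A|}, where 𝒞(G) = {A ⊆ E : every vertex has even degree in the spanning subgraph (V,A)} is the cycle space of G. -/
/-! Since `σᵢσⱼ = ±1`, each Boltzmann factor is `exp (β σᵢσⱼ) = cosh β * (1 + tanh β * σᵢσⱼ)`.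
Expanding the product over the edges gives a sum over edge sets `A` of `(tanh β)^|A| ∏_{ij ∈ A} σᵢσⱼ`,
and `∏_{ij ∈ A} σᵢσⱼ = ∏ᵥ σᵥ ^ deg_A v`. Summing over the spins independently at each vertex,
`∑_{s = ±1} s ^ d` is `2` for even `d` and `0` for odd `d`, so only the even subgraphs survive. -/

attribute [local instance] Classical.propDecidable

/-- For an Ising spin configuration `σ : V → {−1,+1}` (encoded as `V → ℤˣ`), the value
`σ_i σ_j` on an (unordered) edge `{i,j}`. -/
def edgeTerm {V : Type*} (σ : V → ℤˣ) : Sym2 V → ℤ :=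
  Sym2.lift ⟨fun i j => ((σ i * σ j : ℤˣ) : ℤ), fun i j => by simp [mul_comm]⟩

/-- The degree of the vertex `v` in the spanning subgraph `(V, A)`. -/
noncomputable def subDeg {V : Type*} (A : Finset (Sym2 V)) (v : V) : ℕ :=
  (A.filter fun e => v ∈ e).card

/-- The cycle space `𝒞(G)` of `G`: the subsets `A` of the edge set of `G` such that every
vertex has even degree in the spanning subgraph `(V, A)`. -/
noncomputable def cycleSpace {V : Type*} [Fintype V] (G : SimpleGraph V)
    [DecidableRel G.Adj] : Finset (Finset (Sym2 V)) :=
  G.edgeFinset.powerset.filter fun A => ∀ v, Even (subDeg A v)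

open Finset

lemma sum_units_int_pow {R : Type*} [CommRing R] (d : ℕ) :
    ∑ u : ℤˣ, ((u : ℤ) : R) ^ d = if Even d then 2 else 0 := by
  rw [show (univ : Finset ℤˣ) = {1, -1} by decide, sum_pair (by decide)]
  rcases Nat.even_or_odd d with h | h
  · simp [h, h.neg_one_pow, one_add_one_eq_two]
  · simp [h.neg_one_pow, Nat.not_even_iff_odd.2 h]

lemma sum_pi_units_int_prod_pow {V R : Type*} [Fintype V] [DecidableEq V] [CommRing R]
    (d : V → ℕ) :
    ∑ σ : V → ℤˣ, ∏ v, ((σ v : ℤ) : R) ^ d v =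
      if ∀ v, Even (d v) then 2 ^ Fintype.card V else 0 := by
  rw [← Fintype.prod_sum fun v (u : ℤˣ) => ((u : ℤ) : R) ^ d v]
  simp_rw [sum_units_int_pow, prod_ite_zero, mem_univ, true_imp_iff, prod_const, card_univ]

lemma exp_mul_unit_int (β : ℝ) (u : ℤˣ) :
    Real.exp (β * (u : ℤ)) = Real.cosh β * (1 + Real.tanh β * (u : ℤ)) := by
  have hcosh : Real.cosh β ≠ 0 := (Real.cosh_pos β).ne'
  rw [Real.tanh_eq_sinh_div_cosh]
  rcases Int.units_eq_one_or u with rfl | rfl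
  · field_simp; simp [Real.cosh_add_sinh]
  · field_simp; simp [← sub_eq_add_neg, Real.cosh_sub_sinh]

lemma exp_mul_edgeTerm {V : Type*} (β : ℝ) (σ : V → ℤˣ) (e : Sym2 V) :
    Real.exp (β * edgeTerm σ e) = Real.cosh β * (1 + Real.tanh β * edgeTerm σ e) := by
  induction e with
  | h i j => exact exp_mul_unit_int β (σ i * σ j)

lemma edgeTerm_eq_prod_toFinset {V : Type*} [DecidableEq V] (σ : V → ℤˣ) {e : Sym2 V}
    (he : ¬ e.IsDiag) : edgeTerm σ e = ∏ v ∈ e.toFinset, (σ v : ℤ) := by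
  induction e with
  | h i j =>
    rw [Sym2.toFinset_mk_eq, prod_pair (by simpa using he)]
    simp [edgeTerm]

lemma prod_edgeTerm {V : Type*} [Fintype V] (σ : V → ℤˣ) {A : Finset (Sym2 V)}
    (hA : ∀ e ∈ A, ¬ e.IsDiag) : ∏ e ∈ A, edgeTerm σ e = ∏ v, (σ v : ℤ) ^ subDeg A v := by
  classical
  rw [prod_congr rfl fun e he => edgeTerm_eq_prod_toFinset σ (hA e he),
    prod_comm' (t' := univ) (s' := fun v => A.filter (v ∈ ·)) (by simp [and_comm])]
  refine prod_congr rfl fun v _ => ?_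
  rw [prod_const, subDeg]

lemma exp_mul_sum_edgeTerm {V : Type*} [Fintype V] (β : ℝ) (σ : V → ℤˣ) {E : Finset (Sym2 V)}
    (hE : ∀ e ∈ E, ¬ e.IsDiag) :
    Real.exp (β * ∑ e ∈ E, (edgeTerm σ e : ℝ)) =
      Real.cosh β ^ #E *
        ∑ A ∈ E.powerset, Real.tanh β ^ #A * ∏ v, ((σ v : ℤ) : ℝ) ^ subDeg A v := by
  rw [mul_sum, Real.exp_sum]
  simp_rw [exp_mul_edgeTerm]
  rw [prod_mul_distrib, prod_const, prod_one_add]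
  refine congrArg _ (sum_congr rfl fun A hA => ?_)
  rw [prod_mul_distrib, prod_const, ← Int.cast_prod,
    prod_edgeTerm σ fun e he => hE e (mem_powerset.1 hA he)]
  simp only [Int.cast_prod, Int.cast_pow]

/-- High-temperature expansion of the Ising partition function:
`Σ_σ exp(β Σ_{ij∈E} σ_i σ_j) = 2^|V| (cosh β)^|E| Σ_{A ∈ 𝒞(G)} (tanh β)^|A|`. -/
theorem ising_high_temperature_expansion {V : Type*} [Fintype V] [DecidableEq V]
    (G : SimpleGraph V) [DecidableRel G.Adj] (β : ℝ) :
    ∑ σ : V → ℤˣ, Real.exp (β * ∑ e ∈ G.edgeFinset, (edgeTerm σ e : ℝ)) =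
      2 ^ Fintype.card V * Real.cosh β ^ G.edgeFinset.card *
        ∑ A ∈ cycleSpace G, Real.tanh β ^ A.card := by
  have hE : ∀ e ∈ G.edgeFinset, ¬ e.IsDiag := fun e he =>
    G.not_isDiag_of_mem_edgeSet (SimpleGraph.mem_edgeFinset.1 he)
  simp_rw [exp_mul_sum_edgeTerm β _ hE, ← mul_sum]
  rw [sum_comm]
  simp_rw [← mul_sum, sum_pi_units_int_prod_pow, cycleSpace, sum_filter, mul_sum, mul_ite,
    mul_zero]
  refine sum_congr rfl fun A _ => ?_
  split_ifs <;> ring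
end

section
/- Let G be a finite connected simple graph, w > 0, and F : [0,+∞] → [0,1] a function satisfying F(z) = z·F(1/z) for all z. Then the worm transition matrix P_w and the worm distribution π_w are in detailed balance: π_w(A,u,v) · P_w[(A,u,v) → (B,x,y)] = π_w(B,x,y) · P_w[(B,x,y) → (A,u,v)] for all states (A,u,v), (B,x,y) ∈ 𝒮. -/
attribute [local instance] Classical.propDecidable

namespace Worm

/-- The degree of the vertex `x` in the spanning subgraph `(V, A)`. -/
noncomputable def subDeg {V : Type*} (A : Finset (Sym2 V)) (x : V) : ℕ :=
  (A.filter fun e => x ∈ e).card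

/-- `(A,u,v)` is a worm state: `A ⊆ E`, and the set of odd-degree vertices of `(V,A)` is
`{u,v}` if `u ≠ v`, and is empty if `u = v`. -/
def IsWormState {V : Type*} [Fintype V] (G : SimpleGraph V) [DecidableRel G.Adj]
    (A : Finset (Sym2 V)) (u v : V) : Prop :=
  A ⊆ G.edgeFinset ∧ ∀ x, (Odd (subDeg A x) ↔ ((x = u ∨ x = v) ∧ u ≠ v))

/-- The worm state space `𝒮`. -/
abbrev WSt {V : Type*} [Fintype V] (G : SimpleGraph V) [DecidableRel G.Adj] :=
  {p : Finset (Sym2 V) × V × V // IsWormState G p.1 p.2.1 p.2.2}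

variable {V : Type*} [Fintype V] [DecidableEq V] (G : SimpleGraph V) [DecidableRel G.Adj]

/-- The off-diagonal worm transition probabilities: pick one of the two defects uniformly at
random (probability `1/2` each), say `u`; pick an edge `uu'` emanating from `u` uniformly at
random (probability `1/d_u`); the proposed move `(A,u,v) → (A △ uu', u', v)` is accepted with
probability `F(w)` if `uu' ∉ A` and `F(1/w)` if `uu' ∈ A`. -/
noncomputable def offPw (w : ℝ) (F : ℝ → ℝ) : WSt G → WSt G → ℝ := fun st tt =>
  (∑ u' ∈ G.neighborFinset st.1.2.1,
    if tt.1.1 = symmDiff st.1.1 {s(st.1.2.1, u')} ∧ tt.1.2 = (u', st.1.2.2) then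
      (1 / (2 * (G.degree st.1.2.1 : ℝ))) *
        (if s(st.1.2.1, u') ∈ st.1.1 then F w⁻¹ else F w)
    else 0) +
  (∑ v' ∈ G.neighborFinset st.1.2.2,
    if tt.1.1 = symmDiff st.1.1 {s(st.1.2.2, v')} ∧ tt.1.2 = (st.1.2.1, v') then
      (1 / (2 * (G.degree st.1.2.2 : ℝ))) *
        (if s(st.1.2.2, v') ∈ st.1.1 then F w⁻¹ else F w)
    else 0)

/-- The worm transition matrix `P_w`: off-diagonal entries are given by `offPw`, and the
diagonal entries are fixed by the requirement that each row sums to `1`. -/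
noncomputable def Pw (w : ℝ) (F : ℝ → ℝ) : Matrix (WSt G) (WSt G) ℝ := fun st tt =>
  if tt = st then 1 - ∑ tt' ∈ Finset.univ.erase st, offPw G w F st tt'
  else offPw G w F st tt

/-- The worm distribution `π_w(A,u,v) = d_u d_v w^{|A|} / Z_w`. -/
noncomputable def piw (w : ℝ) : WSt G → ℝ := fun st =>
  ((G.degree st.1.2.1 : ℝ) * (G.degree st.1.2.2 : ℝ) * w ^ st.1.1.card) /
    ∑ tt : WSt G, (G.degree tt.1.2.1 : ℝ) * (G.degree tt.1.2.2 : ℝ) * w ^ tt.1.1.card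

/-! Each off-diagonal entry of `P_w` is the sum of two moves, one for each defect. The move of
the defect `u` along the edge `ux` is undone by the move of the defect `x` along the same edge,
and the two sides of detailed balance agree term by term: the degree `d_u` in `π_w` cancels the
proposal probability `1/d_u`, and flipping `ux` changes `w^{|A|}` by a factor `w^{±1}` that
`F(w) = w F(1/w)` compensates exactly. -/

lemma _root_.Finset.symmDiff_singleton_of_mem {α : Type*} [DecidableEq α] {A : Finset α} {e : α}
    (h : e ∈ A) : symmDiff A {e} = A.erase e := by
  ext a
  by_cases ha : a = e <;> simp [Finset.mem_symmDiff, ha, h]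

lemma _root_.Finset.symmDiff_singleton_of_notMem {α : Type*} [DecidableEq α] {A : Finset α}
    {e : α} (h : e ∉ A) : symmDiff A {e} = insert e A := by
  ext a
  by_cases ha : a = e <;> simp [Finset.mem_symmDiff, ha, h]

lemma _root_.Finset.sum_ite_of_imp_eq {ι M : Type*} [AddCommMonoid M] {s : Finset ι}
    {p : ι → Prop} [DecidablePred p] {a : ι} (h : ∀ i, p i → i = a) (f : ι → M) :
    ∑ i ∈ s, (if p i then f i else 0) = if a ∈ s ∧ p a then f a else 0 := by
  by_cases ha : a ∈ s
  · rw [Finset.sum_eq_single_of_mem a ha fun i _ hia => if_neg (mt (h i) hia)]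
    simp only [ha, true_and]
  · rw [Finset.sum_eq_zero fun i hi => if_neg fun hp => ha (h i hp ▸ hi)]
    simp only [ha, false_and, if_false]

lemma _root_.pow_card_mul_acceptance_symmDiff_singleton {α : Type*} [DecidableEq α] {w : ℝ}
    {F : ℝ → ℝ} (hFw : F w = w * F w⁻¹) (A : Finset α) (e : α) :
    w ^ A.card * (if e ∈ A then F w⁻¹ else F w) =
      w ^ (symmDiff A {e}).card * (if e ∈ symmDiff A {e} then F w⁻¹ else F w) := by
  by_cases he : e ∈ A
  · rw [Finset.symmDiff_singleton_of_mem he, if_pos he, if_neg (Finset.notMem_erase e A),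
      ← Finset.card_erase_add_one he, pow_succ, hFw]
    ring
  · rw [Finset.symmDiff_singleton_of_notMem he, if_neg he, if_pos (Finset.mem_insert_self e A),
      Finset.card_insert_of_notMem he, pow_succ, hFw]
    ring

def IsDefectMove (A : Finset (Sym2 V)) (u v : V) (B : Finset (Sym2 V)) (x y : V) : Prop :=
  G.Adj u x ∧ B = symmDiff A {s(u, x)} ∧ y = v

omit [Fintype V] [DecidableRel G.Adj] in
lemma isDefectMove_comm {A B : Finset (Sym2 V)} {u v x y : V} :
    IsDefectMove G A u v B x y ↔ IsDefectMove G B x y A u v := by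
  unfold IsDefectMove
  constructor <;> rintro ⟨hadj, rfl, rfl⟩ <;>
    exact ⟨hadj.symm, by rw [Sym2.eq_swap, symmDiff_symmDiff_cancel_right], rfl⟩

noncomputable def defectMoveRate (w : ℝ) (F : ℝ → ℝ) (A : Finset (Sym2 V)) (u v : V)
    (B : Finset (Sym2 V)) (x y : V) : ℝ :=
  if IsDefectMove G A u v B x y then
    1 / (2 * (G.degree u : ℝ)) * (if s(u, x) ∈ A then F w⁻¹ else F w)
  else 0

lemma offPw_eq_defectMoveRate_add_defectMoveRate (w : ℝ) (F : ℝ → ℝ) (st tt : WSt G) :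
    offPw G w F st tt =
      defectMoveRate G w F st.1.1 st.1.2.1 st.1.2.2 tt.1.1 tt.1.2.1 tt.1.2.2 +
        defectMoveRate G w F st.1.1 st.1.2.2 st.1.2.1 tt.1.1 tt.1.2.2 tt.1.2.1 := by
  obtain ⟨⟨A, u, v⟩, -⟩ := st
  obtain ⟨⟨B, x, y⟩, -⟩ := tt
  simp only [offPw, defectMoveRate, IsDefectMove, Prod.mk.injEq]
  rw [Finset.sum_ite_of_imp_eq (fun _ h => h.2.1.symm),
    Finset.sum_ite_of_imp_eq (fun _ h => h.2.2.symm)]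
  simp only [SimpleGraph.mem_neighborFinset, and_true, true_and]
  -- the two sides differ only in their `Decidable` instances
  congr

noncomputable def weight (w : ℝ) (A : Finset (Sym2 V)) (u v : V) : ℝ :=
  G.degree u * G.degree v * w ^ A.card

omit [DecidableEq V] in
lemma weight_comm (w : ℝ) (A : Finset (Sym2 V)) (u v : V) :
    weight G w A u v = weight G w A v u := by
  rw [weight, weight, mul_comm (G.degree u : ℝ)]

omit [DecidableEq V] in
lemma piw_eq_weight_div (w : ℝ) (st : WSt G) :
    piw G w st = weight G w st.1.1 st.1.2.1 st.1.2.2 /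
      ∑ tt : WSt G, weight G w tt.1.1 tt.1.2.1 tt.1.2.2 :=
  rfl

lemma weight_mul_defectMoveRate_comm {w : ℝ} {F : ℝ → ℝ} (hFw : F w = w * F w⁻¹)
    (A : Finset (Sym2 V)) (u v : V) (B : Finset (Sym2 V)) (x y : V) :
    weight G w A u v * defectMoveRate G w F A u v B x y =
      weight G w B x y * defectMoveRate G w F B x y A u v := by
  unfold defectMoveRate
  by_cases hmove : IsDefectMove G A u v B x y
  · rw [if_pos hmove, if_pos ((isDefectMove_comm G).1 hmove)]
    obtain ⟨hadj, rfl, rfl⟩ := hmove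
    have hu : (G.degree u : ℝ) ≠ 0 := by
      exact_mod_cast ((G.degree_pos_iff_exists_adj u).2 ⟨x, hadj⟩).ne'
    have hx : (G.degree x : ℝ) ≠ 0 := by
      exact_mod_cast ((G.degree_pos_iff_exists_adj x).2 ⟨u, hadj.symm⟩).ne'
    have hflip := pow_card_mul_acceptance_symmDiff_singleton hFw A s(u, x)
    rw [Sym2.eq_swap (a := x)]
    calc _ = G.degree y / 2 * (w ^ A.card * if s(u, x) ∈ A then F w⁻¹ else F w) := by
          unfold weight; field_simp
      _ = _ := by rw [hflip]; unfold weight; field_simp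
  · rw [if_neg hmove, if_neg (mt (isDefectMove_comm G).2 hmove), mul_zero, mul_zero]

theorem worm_detailed_balance (w : ℝ) (hw : 0 < w)
    (F : ℝ → ℝ) (hF : ∀ z : ℝ, 0 ≤ z → F z = z * F z⁻¹) :
    ∀ st tt : WSt G, piw G w st * Pw G w F st tt = piw G w tt * Pw G w F tt st := by
  intro st tt
  by_cases hst : tt = st
  · rw [hst]
  have hFw := hF w hw.le
  rw [Pw, Pw, if_neg hst, if_neg (Ne.symm hst), piw_eq_weight_div, piw_eq_weight_div,
    div_mul_eq_mul_div, div_mul_eq_mul_div, offPw_eq_defectMoveRate_add_defectMoveRate,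
    offPw_eq_defectMoveRate_add_defectMoveRate, mul_add, mul_add]
  congr 2
  · exact weight_mul_defectMoveRate_comm G hFw ..
  · rw [weight_comm G w st.1.1, weight_mul_defectMoveRate_comm G hFw, weight_comm G w tt.1.1]

end Worm
end

section
/- Let G be a finite connected simple graph, w > 0, and F : [0,+∞] → [0,1] a function satisfying F(z) = z·F(1/z) for all z. If F(w) > 0 and F(1/w) > 0, then the worm transition matrix P_w is irreducible on 𝒮: for all states s, t ∈ 𝒮 there exists n ≥ 0 with ((P_w)^n)_{s,t} > 0. -/
/-!
The moves "one end of the worm steps along an edge of `G`, flipping that edge" have positive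
probability because `F(w), F(1/w) > 0`, each of them is undone by a move of the same end, and
`P_w` is entrywise nonnegative because `F ≤ 1` keeps every off-diagonal row sum at most `1`.
So it suffices to lead every state to `(∅, v₀, v₀)` by such moves, by induction on `|A|`.
If `u ≠ v`, the end `u` has odd degree in `A`, so it can step along an edge of `A`, deleting it.
If `u = v`, the two ends travel together (one goes out along an edge, the other follows and
flips it back) without changing `A`: to an endpoint of an edge of `A` if `A ≠ ∅`, and to `v₀`
if `A = ∅`.
-/

attribute [local instance] Classical.propDecidable

namespace Worm

variable {V : Type*} [Fintype V] [DecidableEq V] (G : SimpleGraph V) [DecidableRel G.Adj]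

open scoped symmDiff

theorem _root_.Finset.symmDiff_singleton_of_mem_s5 {α : Type*} [DecidableEq α] {s : Finset α}
    {a : α} (ha : a ∈ s) : s ∆ {a} = s.erase a := by
  ext b; by_cases hb : b = a <;> simp [Finset.mem_symmDiff, hb, ha]

theorem _root_.Finset.symmDiff_singleton_of_notMem_s5 {α : Type*} [DecidableEq α] {s : Finset α}
    {a : α} (ha : a ∉ s) : s ∆ {a} = insert a s := by
  ext b; by_cases hb : b = a <;> simp [Finset.mem_symmDiff, hb, ha]

theorem _root_.Finset.odd_card_symmDiff_singleton {α : Type*} [DecidableEq α] (s : Finset α)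
    (a : α) : Odd (s ∆ {a}).card ↔ ¬Odd s.card := by
  by_cases ha : a ∈ s
  · rw [Finset.symmDiff_singleton_of_mem_s5 ha, ← Finset.card_erase_add_one ha, Nat.odd_add_one,
      not_not]
  · rw [Finset.symmDiff_singleton_of_notMem_s5 ha, Finset.card_insert_of_notMem ha, Nat.odd_add_one]

theorem _root_.Fintype.sum_ite_eq_le_of_injective {ι α M : Type*} [Fintype ι] [DecidableEq α]
    [AddCommMonoid M] [PartialOrder M] [IsOrderedAddMonoid M] {f : ι → α}
    (hf : Function.Injective f) (a : α) {c : M} (hc : 0 ≤ c) :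
    ∑ i, (if f i = a then c else 0) ≤ c := by
  rw [Finset.sum_ite, Finset.sum_const_zero, add_zero, Finset.sum_const]
  calc _ ≤ 1 • c := nsmul_le_nsmul_left hc <| Finset.card_le_one.2 fun i hi j hj =>
          hf ((Finset.mem_filter.1 hi).2.trans (Finset.mem_filter.1 hj).2.symm)
    _ = c := one_nsmul c

theorem _root_.Matrix.exists_pow_apply_pos_of_reflTransGen {n R : Type*} [Fintype n]
    [DecidableEq n] [Ring R] [LinearOrder R] [IsOrderedRing R] [PosMulStrictMono R] [Nontrivial R]
    {A : Matrix n n R} (hA : ∀ i j, 0 ≤ A i j) {i j : n}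
    (h : Relation.ReflTransGen (fun a b => 0 < A a b) i j) : ∃ k, 0 < (A ^ k) i j := by
  let := A.toQuiver
  suffices Nonempty (Quiver.Path i j) by
    obtain ⟨p⟩ := this
    exact ⟨p.length, (Matrix.pow_apply_pos_iff_nonempty_path hA _ i j).2 ⟨⟨p, rfl⟩⟩⟩
  induction h with
  | refl => exact ⟨.nil⟩
  | tail _ hbc ih => exact ⟨ih.some.cons ⟨hbc⟩⟩

theorem odd_subDeg_symmDiff_singleton {α : Type*} [DecidableEq α] (A : Finset (Sym2 α))
    (e : Sym2 α) (x : α) : Odd (subDeg (A ∆ {e}) x) ↔ (Odd (subDeg A x) ↔ x ∉ e) := by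
  have hdeg (B : Finset (Sym2 α)) : subDeg B x = (B.filter (x ∈ ·)).card := by
    unfold subDeg; congr
  rw [hdeg, hdeg]
  by_cases hx : x ∈ e
  · have : (A ∆ {e}).filter (x ∈ ·) = (A.filter (x ∈ ·)) ∆ {e} := by
      ext f; by_cases hf : f = e <;> simp [Finset.mem_symmDiff, hf, hx]
    rw [this, Finset.odd_card_symmDiff_singleton]
    simp [hx]
  · have : (A ∆ {e}).filter (x ∈ ·) = A.filter (x ∈ ·) := by
      ext f; by_cases hf : f = e <;> simp [Finset.mem_symmDiff, hf, hx]
    simp [this, hx]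

theorem exists_mem_of_odd_subDeg {α : Type*} {A : Finset (Sym2 α)} {x : α}
    (hx : Odd (subDeg A x)) : ∃ y, s(x, y) ∈ A := by
  obtain ⟨e, he⟩ := Finset.card_pos.1 hx.pos
  obtain ⟨heA, hxe⟩ := Finset.mem_filter.1 he
  obtain ⟨y, rfl⟩ := Sym2.mem_iff_exists.1 hxe
  exact ⟨y, heA⟩

omit [DecidableEq V] in
theorem IsWormState.diag {A : Finset (Sym2 V)} {x : V} (h : IsWormState G A x x) (y : V) :
    IsWormState G A y y :=
  ⟨h.1, fun z => (h.2 z).trans (by simp)⟩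

omit [DecidableEq V] in
theorem isWormState_empty (x : V) : IsWormState G ∅ x x :=
  ⟨Finset.empty_subset _, fun y => by simp [subDeg]⟩

omit [DecidableEq V] in
theorem IsWormState.adj {A : Finset (Sym2 V)} {u v x y : V} (h : IsWormState G A u v)
    (he : s(x, y) ∈ A) : G.Adj x y :=
  G.mem_edgeFinset.1 (h.1 he)

theorem IsWormState.symmDiff_edge {A : Finset (Sym2 V)} {u v u' : V} (h : IsWormState G A u v)
    (hadj : G.Adj u u') : IsWormState G (A ∆ {s(u, u')}) u' v := by
  refine ⟨Finset.symmDiff_subset_union.trans (Finset.union_subset h.1 (by simpa using hadj)),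
    fun x => ?_⟩
  rw [odd_subDeg_symmDiff_singleton, h.2, Sym2.mem_iff]
  have := hadj.ne
  grind

def Step (s t : WSt G) : Prop :=
  (∃ u', G.Adj s.1.2.1 u' ∧ t.1 = (s.1.1 ∆ {s(s.1.2.1, u')}, u', s.1.2.2)) ∨
    ∃ v', G.Adj s.1.2.2 v' ∧ t.1 = (s.1.1 ∆ {s(s.1.2.2, v')}, s.1.2.1, v')

theorem Step.symm {s t : WSt G} : Step G s t → Step G t s := by
  obtain ⟨⟨A, u, v⟩, hs⟩ := s
  obtain ⟨⟨B, u₁, v₁⟩, ht⟩ := t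
  rintro (⟨u', hadj, h⟩ | ⟨v', hadj, h⟩) <;> simp only [Prod.mk.injEq] at h <;>
    obtain ⟨rfl, rfl, rfl⟩ := h
  · exact Or.inl ⟨u, hadj.symm, by
      dsimp only; rw [Sym2.eq_swap, symmDiff_symmDiff_cancel_right]⟩
  · exact Or.inr ⟨v, hadj.symm, by
      dsimp only; rw [Sym2.eq_swap, symmDiff_symmDiff_cancel_right]⟩

theorem Step.ne {s t : WSt G} (h : Step G s t) : t ≠ s := by
  rintro rfl
  rcases h with ⟨_, _, h⟩ | ⟨_, _, h⟩ <;>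
    exact Finset.singleton_ne_empty _ (symmDiff_eq_left.1 (congrArg Prod.fst h).symm)

instance : Std.Symm (Step G) := ⟨fun _ _ => Step.symm G⟩

omit [DecidableEq V] in
theorem sum_neighborFinset_ite_pos {z y₀ : V} (hy₀ : G.Adj z y₀) (P : V → Prop)
    [DecidablePred P] (hP : P y₀) {q : V → ℝ} (hq : ∀ y, 0 ≤ q y) (hq₀ : 0 < q y₀) :
    0 < ∑ y ∈ G.neighborFinset z, if P y then 1 / (2 * (G.degree z : ℝ)) * q y else 0 := by
  have hdeg : 0 < G.degree z := G.degree_pos_iff_exists_adj z |>.2 ⟨y₀, hy₀⟩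
  refine Finset.sum_pos' (fun y _ => ?_) ⟨y₀, (G.mem_neighborFinset z y₀).2 hy₀, ?_⟩
  · split_ifs
    · exact mul_nonneg (by positivity) (hq y)
    · exact le_rfl
  · rw [if_pos hP]
    exact mul_pos (one_div_pos.2 (mul_pos two_pos (Nat.cast_pos.2 hdeg))) hq₀

theorem sum_sum_neighborFinset_ite_le_half (z : V) (B : V → Finset (Sym2 V)) (Y : V → V × V)
    {q : V → ℝ} (hq : ∀ y, q y ∈ Set.Icc 0 1) :
    ∑ t : WSt G, ∑ y ∈ G.neighborFinset z,
        (if t.1.1 = B y ∧ t.1.2 = Y y then 1 / (2 * (G.degree z : ℝ)) * q y else 0) ≤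
      1 / 2 := by
  rw [Finset.sum_comm]
  calc _ ≤ ∑ y ∈ G.neighborFinset z, 1 / (2 * (G.degree z : ℝ)) * q y := by
        refine Finset.sum_le_sum fun y _ => ?_
        simp only [← Prod.ext_iff (y := (B y, Y y))]
        have hc : 0 ≤ 1 / (2 * (G.degree z : ℝ)) * q y := mul_nonneg (by positivity) (hq y).1
        exact Fintype.sum_ite_eq_le_of_injective (ι := WSt G) Subtype.val_injective _ hc
    _ ≤ ∑ y ∈ G.neighborFinset z, 1 / (2 * (G.degree z : ℝ)) :=
        Finset.sum_le_sum fun y _ => mul_le_of_le_one_right (by positivity) (hq y).2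
    _ = 1 / 2 * (G.degree z / G.degree z) := by
        rw [Finset.sum_const, G.card_neighborFinset_eq_degree, nsmul_eq_mul]; ring
    _ ≤ 1 / 2 := mul_le_of_le_one_right (by norm_num) (div_self_le_one _)

omit [DecidableEq V] in
theorem sum_neighborFinset_ite_nonneg (z : V) (P : V → Prop) [DecidablePred P] {q : V → ℝ}
    (hq : ∀ y, 0 ≤ q y) :
    0 ≤ ∑ y ∈ G.neighborFinset z, if P y then 1 / (2 * (G.degree z : ℝ)) * q y else 0 :=
  Finset.sum_nonneg fun y _ => by
    split_ifs
    · exact mul_nonneg (by positivity) (hq y)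
    · exact le_rfl

section Probabilities

variable {w : ℝ} {F : ℝ → ℝ}

theorem offPw_nonneg (hFw : 0 ≤ F w) (hFw' : 0 ≤ F w⁻¹) (s t : WSt G) :
    0 ≤ offPw G w F s t := by
  have hq (A : Finset (Sym2 V)) (z y : V) : 0 ≤ if s(z, y) ∈ A then F w⁻¹ else F w := by
    split_ifs <;> assumption
  exact add_nonneg (sum_neighborFinset_ite_nonneg G _ _ (hq _ _))
    (sum_neighborFinset_ite_nonneg G _ _ (hq _ _))

theorem sum_offPw_le_one (hFw : F w ∈ Set.Icc 0 1) (hFw' : F w⁻¹ ∈ Set.Icc 0 1) (s : WSt G) :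
    ∑ t, offPw G w F s t ≤ 1 := by
  have hq (A : Finset (Sym2 V)) (z y : V) :
      (if s(z, y) ∈ A then F w⁻¹ else F w) ∈ Set.Icc 0 1 := by
    split_ifs <;> assumption
  simp only [offPw, Finset.sum_add_distrib]
  linarith [sum_sum_neighborFinset_ite_le_half G s.1.2.1 (fun u' => s.1.1 ∆ {s(s.1.2.1, u')})
      (fun u' => (u', s.1.2.2)) (hq s.1.1 s.1.2.1),
    sum_sum_neighborFinset_ite_le_half G s.1.2.2 (fun v' => s.1.1 ∆ {s(s.1.2.2, v')})
      (fun v' => (s.1.2.1, v')) (hq s.1.1 s.1.2.2)]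

theorem Pw_nonneg (hFw : F w ∈ Set.Icc 0 1) (hFw' : F w⁻¹ ∈ Set.Icc 0 1) (s t : WSt G) :
    0 ≤ Pw G w F s t := by
  have hoff := offPw_nonneg G hFw.1 hFw'.1 s
  unfold Pw
  split_ifs
  · rw [sub_nonneg]
    calc ∑ t ∈ Finset.univ.erase s, offPw G w F s t
        ≤ ∑ t, offPw G w F s t :=
          Finset.sum_le_sum_of_subset_of_nonneg (Finset.erase_subset _ _) fun t _ _ => hoff t
      _ ≤ 1 := sum_offPw_le_one G hFw hFw' s
  · exact hoff t

theorem Step.Pw_pos (hFw : 0 < F w) (hFw' : 0 < F w⁻¹) {s t : WSt G} (h : Step G s t) :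
    0 < Pw G w F s t := by
  have hq (A : Finset (Sym2 V)) (z y : V) : 0 < if s(z, y) ∈ A then F w⁻¹ else F w := by
    split_ifs <;> assumption
  rw [Pw, if_neg h.ne, offPw]
  rcases h with ⟨u', hadj, ht⟩ | ⟨v', hadj, ht⟩
  · exact add_pos_of_pos_of_nonneg
      (sum_neighborFinset_ite_pos G hadj _ (Prod.ext_iff.1 ht) (fun y => (hq _ _ y).le) (hq _ _ _))
      (sum_neighborFinset_ite_nonneg G _ _ fun y => (hq _ _ y).le)
  · exact add_pos_of_nonneg_of_pos
      (sum_neighborFinset_ite_nonneg G _ _ fun y => (hq _ _ y).le)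
      (sum_neighborFinset_ite_pos G hadj _ (Prod.ext_iff.1 ht) (fun y => (hq _ _ y).le) (hq _ _ _))

end Probabilities

open Relation

omit [DecidableEq V] in
theorem IsWormState.eq_of_empty {u v : V} (h : IsWormState G ∅ u v) : u = v := by
  by_contra huv
  simpa [subDeg] using (h.2 u).2 ⟨Or.inl rfl, huv⟩

theorem reflTransGen_step_diag_of_adj {A : Finset (Sym2 V)} {x y : V} (h : IsWormState G A x x)
    (hadj : G.Adj x y) : ReflTransGen (Step G) ⟨(A, x, x), h⟩ ⟨(A, y, y), h.diag G y⟩ :=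
  .head (b := ⟨(A ∆ {s(x, y)}, y, x), h.symmDiff_edge G hadj⟩) (Or.inl ⟨y, hadj, rfl⟩) <|
    .single <| Or.inr ⟨y, hadj, by dsimp only; rw [symmDiff_symmDiff_cancel_right]⟩

theorem reflTransGen_step_diag_of_reachable {A : Finset (Sym2 V)} {x y : V}
    (h : IsWormState G A x x) (hxy : G.Reachable x y) :
    ReflTransGen (Step G) ⟨(A, x, x), h⟩ ⟨(A, y, y), h.diag G y⟩ := by
  obtain ⟨p⟩ := hxy
  induction p with
  | nil => exact .refl
  | cons hadj _ ih => exact (reflTransGen_step_diag_of_adj G h hadj).trans (ih _)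

theorem exists_reflTransGen_step_head_mem (hconn : G.Connected) (s : WSt G)
    (hA : s.1.1.Nonempty) :
    ∃ t, ReflTransGen (Step G) s t ∧ t.1.1 = s.1.1 ∧ ∃ y, s(t.1.2.1, y) ∈ t.1.1 := by
  obtain ⟨⟨A, u, v⟩, h⟩ := s
  by_cases huv : u = v
  · subst huv
    obtain ⟨e, he⟩ := hA
    induction e using Sym2.ind with
    | _ a b => exact ⟨_, reflTransGen_step_diag_of_reachable G h (hconn u a), rfl, b, he⟩
  · exact ⟨_, .refl, rfl, exists_mem_of_odd_subDeg ((h.2 u).2 ⟨Or.inl rfl, huv⟩)⟩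

theorem exists_step_card_lt (t : WSt G) {y : V} (hy : s(t.1.2.1, y) ∈ t.1.1) :
    ∃ t', Step G t t' ∧ t'.1.1.card < t.1.1.card := by
  have hadj := t.2.adj G hy
  refine ⟨⟨(t.1.1 ∆ {s(t.1.2.1, y)}, y, t.1.2.2), t.2.symmDiff_edge G hadj⟩,
    Or.inl ⟨y, hadj, rfl⟩, ?_⟩
  simpa [Finset.symmDiff_singleton_of_mem_s5 hy] using Finset.card_erase_lt_of_mem hy

theorem reflTransGen_step_empty (hconn : G.Connected) (v₀ : V) (s : WSt G) :
    ReflTransGen (Step G) s ⟨(∅, v₀, v₀), isWormState_empty G v₀⟩ := by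
  induction hn : s.1.1.card using Nat.strong_induction_on generalizing s with
  | _ n ih =>
  obtain ⟨⟨A, u, v⟩, h⟩ := s
  rcases A.eq_empty_or_nonempty with rfl | hA
  · obtain rfl : u = v := h.eq_of_empty G
    exact reflTransGen_step_diag_of_reachable G h (hconn u v₀)
  · obtain ⟨t, hst, htA, y, hy⟩ :=
      exists_reflTransGen_step_head_mem G hconn ⟨(A, u, v), h⟩ hA
    obtain ⟨t', htt', hlt⟩ := exists_step_card_lt G t hy
    exact hst.trans (.head htt' (ih _ (by rw [← hn, ← htA]; exact hlt) t' rfl))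

theorem worm_irreducible (hconn : G.Connected) (w : ℝ) (hw : 0 < w)
    (F : ℝ → ℝ) (hF01 : ∀ z : ℝ, 0 ≤ z → F z ∈ Set.Icc (0 : ℝ) 1)
    (hFw : 0 < F w) (hFw' : 0 < F w⁻¹) :
    ∀ st tt : WSt G, ∃ k : ℕ, 0 < (Pw G w F ^ k) st tt := by
  intro st tt
  obtain ⟨v₀⟩ := hconn.nonempty
  have hreach : ReflTransGen (Step G) st tt :=
    (reflTransGen_step_empty G hconn v₀ st).trans
      (Std.Symm.symm _ _ (reflTransGen_step_empty G hconn v₀ tt))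
  have hPw := Pw_nonneg G (hF01 w hw.le) (hF01 w⁻¹ (inv_nonneg.2 hw.le))
  exact Matrix.exists_pow_apply_pos_of_reflTransGen hPw
    (ReflTransGen.mono (fun _ _ => Step.Pw_pos G hFw hFw') _ _ hreach)

end Worm
end

section
/- (Proposition 2, irreducibility part) The set ℛ is irreducible under P'_∞: for all states s, t ∈ ℛ one has s ↔ t. -/
attribute [local instance] Classical.propDecidable

namespace FPL

/-- Vertices of the brick-wall honeycomb lattice with periodic boundary conditions. -/
abbrev Vtx (m n : ℕ) := ZMod m × ZMod n

/-- Adjacency on the brick-wall honeycomb lattice: horizontal edges between `(i,j)` and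
`(i+1,j)`, and vertical edges between `(i,j)` and `(i,j+1)` whenever `i+j` is even. -/
def HoneyAdj (m n : ℕ) (x y : Vtx m n) : Prop :=
  (x.2 = y.2 ∧ (y.1 = x.1 + 1 ∨ x.1 = y.1 + 1)) ∨
  (x.1 = y.1 ∧ ((y.2 = x.2 + 1 ∧ Even (x.1.val + x.2.val)) ∨
                (x.2 = y.2 + 1 ∧ Even (y.1.val + y.2.val))))

variable (m n : ℕ) [NeZero m] [NeZero n]

/-- The edge set of the brick-wall honeycomb lattice. -/
noncomputable def honeyEdges : Finset (Sym2 (Vtx m n)) :=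
  Finset.image (fun p : Vtx m n × Vtx m n => s(p.1, p.2))
    (Finset.univ.filter fun p => HoneyAdj m n p.1 p.2)

/-- `bdeg m n A x` is the degree of the vertex `x` in the spanning subgraph `(V, A)`. -/
noncomputable def bdeg (A : Finset (Sym2 (Vtx m n))) (x : Vtx m n) : ℕ :=
  (A.filter fun e => x ∈ e).card

/-- `(A,u,v)` is a state of the worm chain: `A ⊆ E`, and the set of odd-degree vertices of
`(V,A)` is `{u,v}` if `u ≠ v`, and is empty if `u = v`. -/
def IsWormState (A : Finset (Sym2 (Vtx m n))) (u v : Vtx m n) : Prop :=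
  A ⊆ honeyEdges m n ∧ ∀ x, (Odd (bdeg m n A x) ↔ ((x = u ∨ x = v) ∧ u ≠ v))

/-- The worm state space `𝒮`. -/
abbrev WormState := {p : Finset (Sym2 (Vtx m n)) × Vtx m n × Vtx m n //
  IsWormState m n p.1 p.2.1 p.2.2}

/-- The set `ℛ` of states with no isolated vertices. -/
def FullSupport (st : WormState m n) : Prop := ∀ x : Vtx m n, bdeg m n st.1.1 x ≠ 0

/-- The fully-packed worm transition matrix `P'_∞`. -/
noncomputable def Pinf : Matrix (WormState m n) (WormState m n) ℝ := fun st tt =>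
  if st.1.2.1 = st.1.2.2 then
    (if tt = st then (bdeg m n st.1.1 st.1.2.2 : ℝ) / 3 else 0) +
    (if ∃ v' : Vtx m n, HoneyAdj m n st.1.2.2 v' ∧ s(st.1.2.2, v') ∉ st.1.1 ∧
        tt.1.1 = insert s(st.1.2.2, v') st.1.1 ∧
        ((tt.1.2.1 = v' ∧ tt.1.2.2 = st.1.2.2) ∨ (tt.1.2.1 = st.1.2.2 ∧ tt.1.2.2 = v'))
      then 1/6 else 0)
  else
    (if bdeg m n st.1.1 st.1.2.1 = 3 ∧ ∃ u' : Vtx m n, HoneyAdj m n st.1.2.1 u' ∧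
        s(st.1.2.1, u') ∈ st.1.1 ∧ tt.1.1 = st.1.1.erase s(st.1.2.1, u') ∧
        tt.1.2.1 = u' ∧ tt.1.2.2 = st.1.2.2 then 1/6 else 0) +
    (if bdeg m n st.1.1 st.1.2.1 = 1 ∧ ∃ u' : Vtx m n, HoneyAdj m n st.1.2.1 u' ∧
        s(st.1.2.1, u') ∉ st.1.1 ∧ tt.1.1 = insert s(st.1.2.1, u') st.1.1 ∧
        tt.1.2.1 = u' ∧ tt.1.2.2 = st.1.2.2 then 1/4 else 0) +
    (if bdeg m n st.1.1 st.1.2.2 = 3 ∧ ∃ v' : Vtx m n, HoneyAdj m n st.1.2.2 v' ∧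
        s(st.1.2.2, v') ∈ st.1.1 ∧ tt.1.1 = st.1.1.erase s(st.1.2.2, v') ∧
        tt.1.2.1 = st.1.2.1 ∧ tt.1.2.2 = v' then 1/6 else 0) +
    (if bdeg m n st.1.1 st.1.2.2 = 1 ∧ ∃ v' : Vtx m n, HoneyAdj m n st.1.2.2 v' ∧
        s(st.1.2.2, v') ∉ st.1.1 ∧ tt.1.1 = insert s(st.1.2.2, v') st.1.1 ∧
        tt.1.2.1 = st.1.2.1 ∧ tt.1.2.2 = v' then 1/4 else 0)

/-- `st → tt`: some power of `P'_∞` has positive `(st,tt)` entry. -/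
def Reaches (st tt : WormState m n) : Prop := ∃ k : ℕ, 0 < (Pinf m n ^ k) st tt

/-- `st ↔ tt`: mutual reachability. -/
def Comm (st tt : WormState m n) : Prop := Reaches m n st tt ∧ Reaches m n tt st

/-- The fully-packed configuration consisting of all horizontal edges. -/
noncomputable def Hconfig : Finset (Sym2 (Vtx m n)) :=
  Finset.image (fun p : Vtx m n => s(p, (p.1 + 1, p.2))) Finset.univ


end FPL

/-!
Every transition of `P'_∞` moves one defect to a neighbour and toggles the edge between them.
Inside `ℛ` every such move can be undone, directly or (for a merge by insertion) by a
three-step detour, so it suffices to link every state of `ℛ` to `(H, 0, 0)` through `ℛ`,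
where `H` is the set of horizontal edges. Measure a configuration by its symmetric difference with
`H`. A defect of degree 1 misses an `H`-edge and a defect of degree 3 carries a non-`H` edge;
moving the defect along that edge lowers the measure, so the two defects can be walked until
they merge. A merged configuration `A ≠ H` is 2-regular, hence some vertex `x` misses an
`H`-edge `xw`: moving the merged defect to `x` (possible along any lattice edge, and the
lattice is connected) and inserting `xw` lowers the measure again. At `A = H` one last
relocation reaches `(H, 0, 0)`.
-/

namespace FPL

variable {m n : ℕ}

instance [Fact (2 < m)] : Fact (1 < m) := ⟨by have := Fact.out (p := 2 < m); omega⟩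

instance [NeZero n] [Fact (Even n)] : Fact (1 < n) := by
  obtain ⟨k, hk⟩ := Fact.out (p := Even n)
  exact ⟨by have := NeZero.ne n; omega⟩

lemma ZMod.add_one_ne_self {N : ℕ} [Fact (1 < N)] (a : ZMod N) : a + 1 ≠ a := by
  simp

lemma ZMod.add_one_ne_sub_one {N : ℕ} [NeZero N] [Fact (2 < N)] (a : ZMod N) :
    a + 1 ≠ a - 1 := by
  intro h
  have h2 : ((2 : ℕ) : ZMod N) = 0 := by push_cast; linear_combination h
  have := Nat.le_of_dvd two_pos ((ZMod.natCast_eq_zero_iff 2 N).mp h2)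
  have := Fact.out (p := 2 < N)
  omega

lemma ZMod.even_val_add_one {N : ℕ} [NeZero N] [Fact (Even N)] (a : ZMod N) :
    Even (a + 1).val ↔ ¬ Even a.val := by
  rw [ZMod.val_add, ZMod.val_one, Nat.even_iff, Nat.even_iff,
    Nat.mod_mod_of_dvd _ (even_iff_two_dvd.mp Fact.out)]
  omega

lemma Finset.symmDiff_singleton_of_notMem {α : Type*} [DecidableEq α] {A : Finset α} {e : α}
    (he : e ∉ A) : symmDiff A {e} = insert e A := by
  ext a
  by_cases ha : a = e <;> simp [Finset.mem_symmDiff, ha, he]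

lemma Finset.symmDiff_singleton_of_mem {α : Type*} [DecidableEq α] {A : Finset α} {e : α}
    (he : e ∈ A) : symmDiff A {e} = A.erase e := by
  ext a
  by_cases ha : a = e <;> simp [Finset.mem_symmDiff, ha, he]

lemma honeyAdj_symm {x y : Vtx m n} (h : HoneyAdj m n x y) : HoneyAdj m n y x := by
  rcases h with ⟨h2, h1 | h1⟩ | ⟨h1, h | h⟩
  · exact Or.inl ⟨h2.symm, Or.inr h1⟩
  · exact Or.inl ⟨h2.symm, Or.inl h1⟩
  · exact Or.inr ⟨h1.symm, Or.inr h⟩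
  · exact Or.inr ⟨h1.symm, Or.inl h⟩

lemma HoneyAdj.ne [Fact (1 < m)] [Fact (1 < n)] {x y : Vtx m n} (h : HoneyAdj m n x y) :
    x ≠ y := by
  rintro rfl
  rcases h with ⟨-, h | h⟩ | ⟨-, ⟨h, -⟩ | ⟨h, -⟩⟩ <;>
    exact ZMod.add_one_ne_self _ h.symm

def vertNeighbor (x : Vtx m n) : Vtx m n :=
  if Even (x.1.val + x.2.val) then (x.1, x.2 + 1) else (x.1, x.2 - 1)

lemma honeyAdj_iff [NeZero n] [Fact (Even n)] {x y : Vtx m n} :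
    HoneyAdj m n x y ↔ y = (x.1 + 1, x.2) ∨ y = (x.1 - 1, x.2) ∨ y = vertNeighbor x := by
  have parity_flip (a : ℕ) (c : ZMod n) : Even (a + (c + 1).val) ↔ ¬ Even (a + c.val) := by
    rw [Nat.even_add, Nat.even_add, ZMod.even_val_add_one]
    tauto
  constructor
  · rintro (⟨h2, h1 | h1⟩ | ⟨h1, ⟨h2, he⟩ | ⟨h2, he⟩⟩)
    · exact Or.inl (Prod.ext h1 h2.symm)
    · exact Or.inr (Or.inl (Prod.ext (eq_sub_of_add_eq h1.symm) h2.symm))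
    · rw [vertNeighbor, if_pos he]
      exact Or.inr (Or.inr (Prod.ext h1.symm h2))
    · have hodd : ¬ Even (x.1.val + x.2.val) := by rw [h1, h2, parity_flip]; exact not_not.mpr he
      rw [vertNeighbor, if_neg hodd]
      exact Or.inr (Or.inr (Prod.ext h1.symm (eq_sub_of_add_eq h2.symm)))
  · rintro (rfl | rfl | rfl)
    · exact Or.inl ⟨rfl, Or.inl rfl⟩
    · exact Or.inl ⟨rfl, Or.inr (sub_add_cancel _ _).symm⟩
    · unfold vertNeighbor
      split_ifs with he
      · exact Or.inr ⟨rfl, Or.inl ⟨rfl, he⟩⟩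
      · refine Or.inr ⟨rfl, Or.inr ⟨(sub_add_cancel _ _).symm, ?_⟩⟩
        have h := parity_flip x.1.val (x.2 - 1)
        rw [sub_add_cancel] at h
        exact not_not.mp (mt h.mpr he)

lemma vertNeighbor_fst (x : Vtx m n) : (vertNeighbor x).1 = x.1 := by
  unfold vertNeighbor; split_ifs <;> rfl

section Edges

variable [NeZero m] [NeZero n]

lemma mk_mem_honeyEdges {x y : Vtx m n} : s(x, y) ∈ honeyEdges m n ↔ HoneyAdj m n x y := by
  simp only [honeyEdges, Finset.mem_image, Finset.mem_filter, Finset.mem_univ, true_and,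
    Sym2.eq_iff]
  constructor
  · rintro ⟨⟨a, b⟩, hab, ⟨rfl, rfl⟩ | ⟨rfl, rfl⟩⟩
    exacts [hab, honeyAdj_symm hab]
  · exact fun h => ⟨(x, y), h, Or.inl ⟨rfl, rfl⟩⟩

lemma exists_eq_mk_of_mem_honeyEdges {e : Sym2 (Vtx m n)} (he : e ∈ honeyEdges m n)
    {x : Vtx m n} (hx : x ∈ e) : ∃ y, HoneyAdj m n x y ∧ e = s(x, y) := by
  obtain ⟨y, rfl⟩ := Sym2.mem_iff_exists.mp hx
  exact ⟨y, mk_mem_honeyEdges.mp he, rfl⟩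

lemma filter_mem_honeyEdges [Fact (Even n)] (x : Vtx m n) :
    (honeyEdges m n).filter (fun e => x ∈ e) =
      {s(x, (x.1 + 1, x.2)), s(x, (x.1 - 1, x.2)), s(x, vertNeighbor x)} := by
  ext e
  simp only [Finset.mem_filter, Finset.mem_insert, Finset.mem_singleton]
  constructor
  · rintro ⟨he, hx⟩
    obtain ⟨y, hy, rfl⟩ := exists_eq_mk_of_mem_honeyEdges he hx
    simpa only [Sym2.congr_right] using honeyAdj_iff.mp hy
  · rintro (rfl | rfl | rfl) <;>
      exact ⟨mk_mem_honeyEdges.mpr (honeyAdj_iff.mpr (by simp)), Sym2.mem_mk_left _ _⟩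

lemma bdeg_honeyEdges [Fact (2 < m)] [Fact (Even n)] (x : Vtx m n) :
    bdeg m n (honeyEdges m n) x = 3 := by
  have h₁ : x.1 + 1 ≠ x.1 - 1 := ZMod.add_one_ne_sub_one _
  have h₂ : x.1 + 1 ≠ x.1 := ZMod.add_one_ne_self _
  have h₃ : x.1 - 1 ≠ x.1 := fun h => ZMod.add_one_ne_self (x.1 - 1) (by rw [sub_add_cancel, h])
  rw [bdeg, filter_mem_honeyEdges, Finset.card_eq_three]
  refine ⟨_, _, _, ?_, ?_, ?_, rfl⟩ <;> rw [Ne, Sym2.congr_right] <;> intro h <;>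
    simp only [Prod.ext_iff, vertNeighbor_fst] at h
  exacts [h₁ h.1, h₂ h.1, h₃ h.1]

lemma bdeg_le_three [Fact (2 < m)] [Fact (Even n)] {A : Finset (Sym2 (Vtx m n))}
    (hA : A ⊆ honeyEdges m n) (x : Vtx m n) : bdeg m n A x ≤ 3 :=
  bdeg_honeyEdges (m := m) (n := n) x ▸ Finset.card_le_card (Finset.filter_subset_filter _ hA)

lemma mem_of_bdeg_eq_three [Fact (2 < m)] [Fact (Even n)] {A : Finset (Sym2 (Vtx m n))}
    (hA : A ⊆ honeyEdges m n) {x y : Vtx m n} (hx : bdeg m n A x = 3) (hxy : HoneyAdj m n x y) :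
    s(x, y) ∈ A := by
  have hfull : A.filter (fun e => x ∈ e) = (honeyEdges m n).filter (fun e => x ∈ e) :=
    Finset.eq_of_subset_of_card_le (Finset.filter_subset_filter _ hA)
      (by rw [← bdeg, ← bdeg, hx, bdeg_honeyEdges])
  have : s(x, y) ∈ (honeyEdges m n).filter (fun e => x ∈ e) :=
    Finset.mem_filter.mpr ⟨mk_mem_honeyEdges.mpr hxy, Sym2.mem_mk_left _ _⟩
  exact (Finset.mem_filter.mp (hfull ▸ this)).1

lemma exists_adj_mem_sdiff {A B : Finset (Sym2 (Vtx m n))} (hB : B ⊆ honeyEdges m n)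
    {x : Vtx m n} (h : bdeg m n A x < bdeg m n B x) :
    ∃ y, HoneyAdj m n x y ∧ s(x, y) ∈ B ∧ s(x, y) ∉ A := by
  obtain ⟨e, heB, heA⟩ := Finset.exists_mem_notMem_of_card_lt_card h
  rw [Finset.mem_filter] at heB heA
  obtain ⟨y, hxy, rfl⟩ := exists_eq_mk_of_mem_honeyEdges (hB heB.1) heB.2
  exact ⟨y, hxy, heB.1, fun hA => heA ⟨hA, heB.2⟩⟩

lemma Hconfig_subset : Hconfig m n ⊆ honeyEdges m n := by
  intro e he
  obtain ⟨p, -, rfl⟩ := Finset.mem_image.mp he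
  exact mk_mem_honeyEdges.mpr (Or.inl ⟨rfl, Or.inl rfl⟩)

lemma mk_mem_Hconfig (p : Vtx m n) : s(p, (p.1 + 1, p.2)) ∈ Hconfig m n :=
  Finset.mem_image_of_mem _ (Finset.mem_univ p)

lemma filter_mem_Hconfig (x : Vtx m n) :
    (Hconfig m n).filter (fun e => x ∈ e) = {s(x, (x.1 + 1, x.2)), s(x, (x.1 - 1, x.2))} := by
  have hleft : s(x, (x.1 - 1, x.2)) = s((x.1 - 1, x.2), ((x.1 - 1, x.2).1 + 1, x.2)) := by
    rw [Sym2.eq_swap]; simp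
  ext e
  simp only [Finset.mem_filter, Finset.mem_insert, Finset.mem_singleton]
  constructor
  · rintro ⟨he, hx⟩
    obtain ⟨p, -, rfl⟩ := Finset.mem_image.mp he
    rcases Sym2.mem_iff.mp hx with rfl | rfl
    · exact Or.inl rfl
    · exact Or.inr (by rw [hleft]; simp)
  · rintro (rfl | rfl)
    · exact ⟨mk_mem_Hconfig x, Sym2.mem_mk_left _ _⟩
    · exact ⟨hleft ▸ mk_mem_Hconfig _, Sym2.mem_mk_left _ _⟩

lemma bdeg_Hconfig [Fact (2 < m)] (x : Vtx m n) : bdeg m n (Hconfig m n) x = 2 := by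
  rw [bdeg, filter_mem_Hconfig, Finset.card_pair]
  rw [Ne, Sym2.congr_right, Prod.ext_iff]
  exact fun h => ZMod.add_one_ne_sub_one _ h.1

end Edges

section Connectivity

open Relation

lemma reflTransGen_honeyAdj_row [NeZero m] (x : Vtx m n) (i : ZMod m) :
    ReflTransGen (HoneyAdj m n) x (i, x.2) := by
  suffices ∀ k : ℕ, ReflTransGen (HoneyAdj m n) x (x.1 + k, x.2) by
    simpa using this (i - x.1).val
  intro k
  induction k with
  | zero => simpa using ReflTransGen.refl
  | succ k ih =>
    rw [Nat.cast_succ, ← add_assoc]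
    exact ih.tail (Or.inl ⟨rfl, Or.inl rfl⟩)

lemma exists_honeyAdj_up [Fact (1 < m)] (j : ZMod n) :
    ∃ i : ZMod m, HoneyAdj m n (i, j) (i, j + 1) := by
  by_cases hj : Even j.val
  · exact ⟨0, Or.inr ⟨rfl, Or.inl ⟨rfl, by simpa using hj⟩⟩⟩
  · refine ⟨1, Or.inr ⟨rfl, Or.inl ⟨rfl, ?_⟩⟩⟩
    rw [ZMod.val_one, add_comm, Nat.even_add_one]
    exact hj

lemma honeyAdj_reflTransGen [NeZero m] [NeZero n] [Fact (1 < m)] (x y : Vtx m n) :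
    ReflTransGen (HoneyAdj m n) x y := by
  suffices ∀ k : ℕ, ∀ i : ZMod m, ReflTransGen (HoneyAdj m n) x (i, x.2 + k) by
    simpa using this (y.2 - x.2).val y.1
  intro k
  induction k with
  | zero => simpa using reflTransGen_honeyAdj_row x
  | succ k ih =>
    intro i
    obtain ⟨i₀, hup⟩ := exists_honeyAdj_up (m := m) (x.2 + (k : ZMod n))
    rw [Nat.cast_succ, ← add_assoc]
    exact ((ih i₀).tail hup).trans (reflTransGen_honeyAdj_row _ i)

end Connectivity

section Degrees

variable {A : Finset (Sym2 (Vtx m n))} {e : Sym2 (Vtx m n)}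

lemma bdeg_symmDiff_singleton_of_notMem (he : e ∉ A) (x : Vtx m n) :
    bdeg m n (symmDiff A {e}) x = bdeg m n A x + if x ∈ e then 1 else 0 := by
  rw [Finset.symmDiff_singleton_of_notMem he, bdeg, bdeg, Finset.filter_insert]
  split_ifs
  · exact Finset.card_insert_of_notMem fun h => he (Finset.mem_of_mem_filter _ h)
  · rfl

lemma bdeg_symmDiff_singleton_of_mem (he : e ∈ A) (x : Vtx m n) :
    bdeg m n (symmDiff A {e}) x + (if x ∈ e then 1 else 0) = bdeg m n A x := by
  rw [Finset.symmDiff_singleton_of_mem he, bdeg, bdeg, Finset.filter_erase]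
  split_ifs with hx
  · exact Finset.card_erase_add_one (Finset.mem_filter.mpr ⟨he, hx⟩)
  · rw [add_zero, Finset.erase_eq_of_notMem (by simp [hx])]

lemma odd_bdeg_symmDiff_singleton (A : Finset (Sym2 (Vtx m n))) (e : Sym2 (Vtx m n))
    (x : Vtx m n) : Odd (bdeg m n (symmDiff A {e}) x) ↔ (Odd (bdeg m n A x) ↔ x ∉ e) := by
  have h₁ := bdeg_symmDiff_singleton_of_mem (A := A) (e := e) (x := x)
  have h₂ := bdeg_symmDiff_singleton_of_notMem (A := A) (e := e) (x := x)
  by_cases he : e ∈ A <;> by_cases hx : x ∈ e <;>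
    simp only [he, hx, Nat.odd_iff, if_true, if_false, not_true, not_false_iff, forall_const,
      iff_true, iff_false] at h₁ h₂ ⊢ <;> omega

end Degrees

section States

variable [NeZero m] [NeZero n] {A : Finset (Sym2 (Vtx m n))} {u v : Vtx m n}

lemma IsWormState.swap (h : IsWormState m n A u v) : IsWormState m n A v u :=
  ⟨h.1, fun x => (h.2 x).trans (by rw [or_comm, ne_comm])⟩

lemma IsWormState.recenter (h : IsWormState m n A u v) (huv : u = v) (y : Vtx m n) :
    IsWormState m n A y y :=
  ⟨h.1, fun x => by simp [h.2 x, huv]⟩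

lemma IsWormState.moveU [Fact (1 < m)] [Fact (1 < n)] {w : Vtx m n}
    (h : IsWormState m n A u v) (huw : HoneyAdj m n u w) :
    IsWormState m n (symmDiff A {s(u, w)}) w v := by
  refine ⟨fun e he => ?_, fun x => ?_⟩
  · rcases Finset.mem_symmDiff.mp he with ⟨heA, -⟩ | ⟨he, -⟩
    · exact h.1 heA
    · exact Finset.mem_singleton.mp he ▸ mk_mem_honeyEdges.mpr huw
  · have := huw.ne
    rw [odd_bdeg_symmDiff_singleton, h.2 x, Sym2.mem_iff]
    grind

end States

namespace WormState

variable [NeZero m] [NeZero n]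

abbrev edges (s : WormState m n) : Finset (Sym2 (Vtx m n)) := s.1.1

abbrev u (s : WormState m n) : Vtx m n := s.1.2.1

abbrev v (s : WormState m n) : Vtx m n := s.1.2.2

@[simp] lemma edges_mk {A : Finset (Sym2 (Vtx m n))} {u v : Vtx m n}
    (h : IsWormState m n A u v) : edges ⟨(A, u, v), h⟩ = A := rfl

@[simp] lemma u_mk {A : Finset (Sym2 (Vtx m n))} {u v : Vtx m n}
    (h : IsWormState m n A u v) : WormState.u ⟨(A, u, v), h⟩ = u := rfl

@[simp] lemma v_mk {A : Finset (Sym2 (Vtx m n))} {u v : Vtx m n}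
    (h : IsWormState m n A u v) : WormState.v ⟨(A, u, v), h⟩ = v := rfl

def swap (s : WormState m n) : WormState m n := ⟨(s.edges, s.v, s.u), s.2.swap⟩

lemma swap_involutive : Function.Involutive (swap (m := m) (n := n)) := fun _ => rfl

def recenter (s : WormState m n) (hs : s.u = s.v) (y : Vtx m n) : WormState m n :=
  ⟨(s.edges, y, y), s.2.recenter hs y⟩

lemma recenter_self (s : WormState m n) (hd : s.u = s.v) : s.recenter hd s.u = s :=
  Subtype.ext (Prod.ext rfl (Prod.ext rfl hd))

/- Every non-identity transition of `P'_∞` is a move of `u` or, after `swap`, of `v`. -/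
def moveU [Fact (1 < m)] [Fact (1 < n)] (s : WormState m n) (w : Vtx m n)
    (h : HoneyAdj m n s.u w) : WormState m n :=
  ⟨(symmDiff s.edges {s(s.u, w)}, w, s.v), s.2.moveU h⟩

lemma moveU_moveU [Fact (1 < m)] [Fact (1 < n)] (s : WormState m n) {w : Vtx m n}
    (h : HoneyAdj m n s.u w) : (s.moveU w h).moveU s.u (honeyAdj_symm h) = s := by
  refine Subtype.ext (Prod.ext ?_ rfl)
  change symmDiff (symmDiff s.edges {s(s.u, w)}) {s(w, s.u)} = s.edges
  rw [Sym2.eq_swap, symmDiff_symmDiff_cancel_right]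

end WormState

section Reachability

variable [NeZero m] [NeZero n]

lemma Pinf_nonneg (s t : WormState m n) : 0 ≤ Pinf m n s t := by
  unfold Pinf
  split_ifs <;> positivity

lemma Pinf_pow_nonneg (k : ℕ) (s t : WormState m n) : 0 ≤ (Pinf m n ^ k) s t := by
  induction k generalizing t with
  | zero => by_cases h : s = t <;> simp [h]
  | succ k ih =>
    rw [pow_succ, Matrix.mul_apply]
    exact Finset.sum_nonneg fun c _ => mul_nonneg (ih c) (Pinf_nonneg c t)

lemma Pinf_swap (s t : WormState m n) : Pinf m n s.swap t.swap = Pinf m n s t := by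
  obtain ⟨⟨A, u, v⟩, hs⟩ := s
  obtain ⟨⟨B, a, b⟩, ht⟩ := t
  by_cases huv : u = v
  · subst huv
    simp only [Pinf, WormState.swap, if_true, Subtype.mk.injEq, Prod.mk.injEq,
      and_comm (a := b = _) (b := a = _), or_comm (a := a = u ∧ b = _)]
  · simp only [Pinf, WormState.swap, huv, Ne.symm huv, if_false,
      and_comm (a := b = _) (b := a = _)]
    ring

lemma Pinf_pow_swap (k : ℕ) (s t : WormState m n) :
    (Pinf m n ^ k) s.swap t.swap = (Pinf m n ^ k) s t := by
  let e := (WormState.swap_involutive (m := m) (n := n)).toPerm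
  have hP : Matrix.reindexAlgEquiv ℝ ℝ e (Pinf m n) = Pinf m n := by
    ext s t
    exact Pinf_swap s t
  have := congr_fun₂ (map_pow (Matrix.reindexAlgEquiv ℝ ℝ e) (Pinf m n) k) s.swap t.swap
  rw [hP] at this
  exact this.symm

namespace Reaches

variable {s t r : WormState m n}

lemma refl (s : WormState m n) : Reaches m n s s :=
  ⟨0, by simp⟩

lemma trans (h₁ : Reaches m n s t) (h₂ : Reaches m n t r) : Reaches m n s r := by
  obtain ⟨a, ha⟩ := h₁
  obtain ⟨b, hb⟩ := h₂
  refine ⟨a + b, ?_⟩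
  rw [pow_add, Matrix.mul_apply]
  exact Finset.sum_pos' (fun c _ => mul_nonneg (Pinf_pow_nonneg a s c) (Pinf_pow_nonneg b c r))
    ⟨t, Finset.mem_univ t, mul_pos ha hb⟩

lemma of_Pinf_pos (h : 0 < Pinf m n s t) : Reaches m n s t :=
  ⟨1, by rwa [pow_one]⟩

lemma swap (h : Reaches m n s t) : Reaches m n s.swap t.swap := by
  obtain ⟨k, hk⟩ := h
  exact ⟨k, by rwa [Pinf_pow_swap]⟩

end Reaches

namespace Comm

variable {s t r : WormState m n}

lemma refl (s : WormState m n) : Comm m n s s := ⟨.refl s, .refl s⟩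

lemma symm (h : Comm m n s t) : Comm m n t s := ⟨h.2, h.1⟩

lemma trans (h₁ : Comm m n s t) (h₂ : Comm m n t r) : Comm m n s r :=
  ⟨h₁.1.trans h₂.1, h₂.2.trans h₁.2⟩

lemma swap (h : Comm m n s t) : Comm m n s.swap t.swap := ⟨h.1.swap, h.2.swap⟩

end Comm

end Reachability

section Moves

variable [NeZero m] [NeZero n] [Fact (1 < m)] [Fact (1 < n)]

lemma reaches_moveU_of_notMem (s : WormState m n) {w : Vtx m n} (h : HoneyAdj m n s.u w)
    (he : s(s.u, w) ∉ s.edges) (hd : s.u = s.v ∨ bdeg m n s.edges s.u = 1) :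
    Reaches m n s (s.moveU w h) := by
  obtain ⟨⟨A, u, v⟩, hs⟩ := s
  have hB := Finset.symmDiff_singleton_of_notMem he
  refine .of_Pinf_pos ?_
  by_cases huv : u = v
  · subst huv
    have hmove : ∃ w', HoneyAdj m n u w' ∧ s(u, w') ∉ A ∧
        symmDiff A {s(u, w)} = insert s(u, w') A ∧ ((w = w' ∧ u = u) ∨ (w = u ∧ u = w')) :=
      ⟨w, h, he, hB, Or.inl ⟨rfl, rfl⟩⟩
    dsimp only [Pinf, WormState.moveU]
    rw [if_pos rfl, if_pos hmove]
    split_ifs <;> positivity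
  · have hmove : bdeg m n A u = 1 ∧ ∃ w', HoneyAdj m n u w' ∧ s(u, w') ∉ A ∧
        symmDiff A {s(u, w)} = insert s(u, w') A ∧ w = w' ∧ v = v :=
      ⟨hd.resolve_left huv, w, h, he, hB, rfl, rfl⟩
    dsimp only [Pinf, WormState.moveU]
    rw [if_neg huv, if_pos hmove]
    split_ifs <;> positivity

lemma reaches_moveU_of_mem (s : WormState m n) {w : Vtx m n} (h : HoneyAdj m n s.u w)
    (he : s(s.u, w) ∈ s.edges) (huv : s.u ≠ s.v) (hd : bdeg m n s.edges s.u = 3) :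
    Reaches m n s (s.moveU w h) := by
  obtain ⟨⟨A, u, v⟩, hs⟩ := s
  refine .of_Pinf_pos ?_
  have hmove : bdeg m n A u = 3 ∧ ∃ w', HoneyAdj m n u w' ∧ s(u, w') ∈ A ∧
      symmDiff A {s(u, w)} = A.erase s(u, w') ∧ w = w' ∧ v = v :=
    ⟨hd, w, h, he, Finset.symmDiff_singleton_of_mem he, rfl, rfl⟩
  dsimp only [Pinf, WormState.moveU]
  rw [if_neg huv, if_pos hmove]
  split_ifs <;> positivity

end Moves

section FullSupport

variable [NeZero m] [NeZero n] {s : WormState m n}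

lemma FullSupport.swap (hs : FullSupport m n s) : FullSupport m n s.swap := hs

variable [Fact (2 < m)] [Fact (Even n)]

lemma WormState.bdeg_eq_one_or_three (s : WormState m n) (huv : s.u ≠ s.v) {x : Vtx m n}
    (hx : x = s.u ∨ x = s.v) : bdeg m n s.edges x = 1 ∨ bdeg m n s.edges x = 3 := by
  have hodd : Odd (bdeg m n s.edges x) := (s.2.2 x).mpr ⟨hx, huv⟩
  have : bdeg m n s.edges x ≤ 3 := bdeg_le_three s.2.1 x
  rw [Nat.odd_iff] at hodd
  omega

lemma FullSupport.bdeg_eq_two (hs : FullSupport m n s) {x : Vtx m n}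
    (hx : s.u = s.v ∨ x ≠ s.u ∧ x ≠ s.v) : bdeg m n s.edges x = 2 := by
  have heven : ¬ Odd (bdeg m n s.edges x) := by rw [s.2.2 x]; tauto
  have : bdeg m n s.edges x ≤ 3 := bdeg_le_three s.2.1 x
  have : bdeg m n s.edges x ≠ 0 := hs x
  rw [Nat.odd_iff] at heven
  omega

lemma FullSupport.moveU (hs : FullSupport m n s) {w : Vtx m n} (h : HoneyAdj m n s.u w)
    (hdeg : s(s.u, w) ∈ s.edges → 2 ≤ bdeg m n s.edges s.u ∧ 2 ≤ bdeg m n s.edges w) :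
    FullSupport m n (s.moveU w h) := by
  intro x
  have hx : bdeg m n s.edges x ≠ 0 := hs x
  change bdeg m n (symmDiff s.edges {s(s.u, w)}) x ≠ 0
  by_cases he : s(s.u, w) ∈ s.edges
  · have hdeg := hdeg he
    have := bdeg_symmDiff_singleton_of_mem he x
    split_ifs at this with hxe
    · rcases Sym2.mem_iff.mp hxe with rfl | rfl <;> omega
    · omega
  · have := bdeg_symmDiff_singleton_of_notMem he x
    omega

lemma comm_moveU_of_bdeg_eq_three (hs : FullSupport m n s) {w : Vtx m n}
    (h : HoneyAdj m n s.u w) (huv : s.u ≠ s.v) (hd : bdeg m n s.edges s.u = 3) :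
    Comm m n s (s.moveU w h) := by
  have he : s(s.u, w) ∈ s.edges := mem_of_bdeg_eq_three s.2.1 hd h
  have he' : s(w, s.u) ∉ (s.moveU w h).edges := by
    simp [WormState.moveU, Sym2.eq_swap (a := w), Finset.mem_symmDiff, he]
  have hdw : w = s.v ∨ bdeg m n (s.moveU w h).edges w = 1 := by
    refine or_iff_not_imp_left.mpr fun hwv => ?_
    have hdw : bdeg m n s.edges w = 2 := hs.bdeg_eq_two (Or.inr ⟨h.ne.symm, hwv⟩)
    have := bdeg_symmDiff_singleton_of_mem he w
    simp only [Sym2.mem_mk_right, if_true] at this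
    change bdeg m n (symmDiff s.edges {s(s.u, w)}) w = 1
    omega
  refine ⟨reaches_moveU_of_mem s h he huv hd, ?_⟩
  simpa [s.moveU_moveU h] using reaches_moveU_of_notMem _ (honeyAdj_symm h) he' hdw

lemma comm_moveU_of_notMem_of_ne (hs : FullSupport m n s) {w : Vtx m n}
    (h : HoneyAdj m n s.u w) (he : s(s.u, w) ∉ s.edges) (hw : s.u = s.v ∨ w ≠ s.v) :
    Comm m n s (s.moveU w h) := by
  have hdu : s.u = s.v ∨ bdeg m n s.edges s.u = 1 := by
    refine or_iff_not_imp_left.mpr fun huv => ?_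
    exact (s.bdeg_eq_one_or_three huv (Or.inl rfl)).resolve_right fun h3 =>
      he (mem_of_bdeg_eq_three s.2.1 h3 h)
  have hwv : w ≠ s.v := hw.elim (fun huv => huv ▸ h.ne.symm) id
  have hdw : bdeg m n s.edges w = 2 := hs.bdeg_eq_two (Or.inr ⟨h.ne.symm, hwv⟩)
  have he' : s(w, s.u) ∈ (s.moveU w h).edges := by
    simp [WormState.moveU, Sym2.eq_swap (a := w), Finset.mem_symmDiff, he]
  have hdw' : bdeg m n (s.moveU w h).edges w = 3 := by
    change bdeg m n (symmDiff s.edges {s(s.u, w)}) w = 3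
    simp [bdeg_symmDiff_singleton_of_notMem he, hdw]
  refine ⟨reaches_moveU_of_notMem s h he hdu, ?_⟩
  simpa [s.moveU_moveU h] using reaches_moveU_of_mem _ (honeyAdj_symm h) he' hwv hdw'

/- A merged state only allows insertions, so a merge by insertion of `uv` is undone by inserting
an absent edge `vw` at the merged defect and then taking back the two moves `u → v` and
`v → w` of the original defects. -/
lemma reaches_moveU_v_self (hs : FullSupport m n s) (huv : s.u ≠ s.v) (h : HoneyAdj m n s.u s.v)
    (he : s(s.u, s.v) ∉ s.edges) : Reaches m n (s.moveU s.v h) s := by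
  obtain ⟨⟨A, u, v⟩, hA⟩ := s
  simp only [WormState.edges_mk, WormState.u_mk, WormState.v_mk] at huv h he ⊢
  set t := WormState.moveU ⟨(A, u, v), hA⟩ v h
  have hdv : bdeg m n A v = 1 :=
    (WormState.bdeg_eq_one_or_three ⟨(A, u, v), hA⟩ huv (Or.inr rfl)).resolve_right fun h3 =>
      he (Sym2.eq_swap (a := v) ▸ mem_of_bdeg_eq_three hA.1 h3 (honeyAdj_symm h))
  have hdt : bdeg m n t.edges v = 2 := by
    simp [t, WormState.moveU, bdeg_symmDiff_singleton_of_notMem he, hdv]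
  obtain ⟨w, hvw, -, hwt⟩ := exists_adj_mem_sdiff (A := t.edges) subset_rfl
    (by rw [hdt, bdeg_honeyEdges]; norm_num)
  have hwu : w ≠ u := by
    rintro rfl
    exact hwt (by simp [t, WormState.moveU, Sym2.eq_swap (a := v), Finset.mem_symmDiff, he])
  have hwA : s(v, w) ∉ A := fun hw =>
    hwt (by simp [t, WormState.moveU, Finset.mem_symmDiff, hw, hwu, hvw.ne.symm])
  set t₂ := ((WormState.swap ⟨(A, u, v), hA⟩).moveU w hvw).swap
  have c₂ : Comm m n ⟨(A, u, v), hA⟩ t₂ :=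
    (comm_moveU_of_notMem_of_ne hs.swap hvw hwA (Or.inr hwu)).swap
  have huv₂ : s(u, v) ∉ t₂.edges := by
    simp [t₂, WormState.moveU, WormState.swap, Finset.mem_symmDiff, he, hwu.symm, huv]
  have c₁ : Comm m n t₂ (t₂.moveU v h) :=
    comm_moveU_of_notMem_of_ne (hs.swap.moveU hvw fun h' => absurd h' hwA).swap h huv₂
      (Or.inr hvw.ne)
  have hmid : (t.moveU w hvw).swap = t₂.moveU v h :=
    Subtype.ext (Prod.ext (symmDiff_right_comm _ _ _) rfl)
  exact (reaches_moveU_of_notMem t hvw hwt (Or.inl rfl)).swap.trans (hmid ▸ c₁.2.trans c₂.2)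

lemma comm_moveU_of_notMem (hs : FullSupport m n s) {w : Vtx m n} (h : HoneyAdj m n s.u w)
    (he : s(s.u, w) ∉ s.edges) : Comm m n s (s.moveU w h) := by
  by_cases hmerge : s.u ≠ s.v ∧ w = s.v
  · obtain ⟨huv, rfl⟩ := hmerge
    exact ⟨reaches_moveU_of_notMem s h he (Or.inr ((s.bdeg_eq_one_or_three huv
      (Or.inl rfl)).resolve_right fun h3 => he (mem_of_bdeg_eq_three s.2.1 h3 h))),
      reaches_moveU_v_self hs huv h he⟩
  · exact comm_moveU_of_notMem_of_ne hs h he (by tauto)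

lemma comm_recenter_of_adj_of_notMem (hs : FullSupport m n s) (hd : s.u = s.v) {y : Vtx m n}
    (h : HoneyAdj m n s.u y) (he : s(s.u, y) ∉ s.edges) : Comm m n s (s.recenter hd y) := by
  obtain ⟨⟨A, x, x'⟩, hA⟩ := s
  obtain rfl : x = x' := hd
  simp only [WormState.edges_mk, WormState.u_mk] at h he
  set t := WormState.moveU ⟨(A, x, x), hA⟩ y h
  have hdx : bdeg m n t.edges x = 3 := by
    simp [t, WormState.moveU, bdeg_symmDiff_singleton_of_notMem he, hs.bdeg_eq_two (Or.inl rfl)]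
  have c : Comm m n t.swap (t.swap.moveU y h) :=
    comm_moveU_of_bdeg_eq_three (hs.moveU h fun h' => absurd h' he).swap h h.ne hdx
  have hend : (t.swap.moveU y h).swap = WormState.recenter ⟨(A, x, x), hA⟩ rfl y :=
    Subtype.ext (Prod.ext (symmDiff_symmDiff_cancel_right _ _) rfl)
  exact (comm_moveU_of_notMem hs h he).trans (hend ▸ c.swap)

/- Insert an absent edge `xw`, then erase `xy` and `wx`. -/
lemma comm_moveU_recenter_of_mem (hs : FullSupport m n s) (hd : s.u = s.v) {y : Vtx m n}
    (h : HoneyAdj m n s.u y) (he : s(s.u, y) ∈ s.edges) :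
    Comm m n s ((s.recenter hd y).moveU s.u (honeyAdj_symm h)) := by
  obtain ⟨⟨A, x, x'⟩, hA⟩ := s
  obtain rfl : x = x' := hd
  simp only [WormState.edges_mk, WormState.u_mk] at h he ⊢
  have hdeg (z : Vtx m n) : bdeg m n A z = 2 := hs.bdeg_eq_two (Or.inl rfl)
  obtain ⟨w, hxw, -, hw⟩ := exists_adj_mem_sdiff (A := A) (x := x) subset_rfl
    (by rw [hdeg, bdeg_honeyEdges]; norm_num)
  have hxw' : x ≠ w := hxw.ne
  have hwy : w ≠ y := by rintro rfl; exact hw he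
  set t₁ := WormState.moveU ⟨(A, x, x), hA⟩ w hxw
  have fs₁ : FullSupport m n t₁ := hs.moveU hxw fun h' => absurd h' hw
  have hdeg₁ :
      bdeg m n t₁.edges x = 3 ∧ bdeg m n t₁.edges y = 2 ∧ bdeg m n t₁.edges w = 3 := by
    simp [t₁, WormState.moveU, bdeg_symmDiff_singleton_of_notMem hw, hdeg, h.ne.symm, hwy.symm]
  have hy₁ : s(x, y) ∈ t₁.edges := by
    simp [t₁, WormState.moveU, Finset.mem_symmDiff, he, hwy.symm, hxw']
  set t₂ := t₁.swap.moveU y h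
  have fs₂ : FullSupport m n t₂ :=
    fs₁.swap.moveU h fun _ => ⟨hdeg₁.1.symm ▸ by norm_num, hdeg₁.2.1.ge⟩
  have hdeg₂ : bdeg m n t₂.edges x = 2 ∧ bdeg m n t₂.edges w = 3 := by
    have hx := bdeg_symmDiff_singleton_of_mem hy₁ x
    have hw := bdeg_symmDiff_singleton_of_mem hy₁ w
    simp only [Sym2.mem_iff, true_or, if_true, hxw'.symm, hwy, or_self, if_false,
      add_zero] at hx hw
    exact ⟨by change bdeg m n (symmDiff t₁.edges {s(x, y)}) x = 2; omega,
      by change bdeg m n (symmDiff t₁.edges {s(x, y)}) w = 3; omega⟩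
  have hend : t₂.swap.moveU x (honeyAdj_symm hxw) =
      (WormState.recenter ⟨(A, x, x), hA⟩ rfl y).moveU x (honeyAdj_symm h) := by
    refine Subtype.ext (Prod.ext ?_ rfl)
    change symmDiff (symmDiff (symmDiff A {s(x, w)}) {s(x, y)}) {s(w, x)} = symmDiff A {s(y, x)}
    rw [Sym2.eq_swap (a := w), Sym2.eq_swap (a := y), symmDiff_right_comm _ {s(x, y)},
      symmDiff_symmDiff_cancel_right]
  exact (comm_moveU_of_notMem hs hxw hw).trans
    ((comm_moveU_of_bdeg_eq_three fs₁.swap h hxw' hdeg₁.1).swap.trans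
      (hend ▸ comm_moveU_of_bdeg_eq_three fs₂.swap _ hwy hdeg₂.2))

lemma comm_recenter_of_adj (hs : FullSupport m n s) (hd : s.u = s.v) {y : Vtx m n}
    (h : HoneyAdj m n s.u y) : Comm m n s (s.recenter hd y) := by
  by_cases he : s(s.u, y) ∈ s.edges
  · have hdeg (z : Vtx m n) : bdeg m n s.edges z = 2 := hs.bdeg_eq_two (Or.inl hd)
    have hr : FullSupport m n ((s.recenter hd y).moveU s.u (honeyAdj_symm h)) :=
      FullSupport.moveU (s := s.recenter hd y) hs _ fun _ => ⟨(hdeg y).ge, (hdeg s.u).ge⟩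
    have he' : s(s.u, y) ∉ ((s.recenter hd y).moveU s.u (honeyAdj_symm h)).edges := by
      simp [WormState.recenter, WormState.moveU, Sym2.eq_swap (a := y), Finset.mem_symmDiff, he]
    have hend : ((s.recenter hd y).moveU s.u (honeyAdj_symm h)).moveU y h = s.recenter hd y :=
      (s.recenter hd y).moveU_moveU (honeyAdj_symm h)
    have c := comm_moveU_of_notMem hr h he'
    rw [hend] at c
    exact (comm_moveU_recenter_of_mem hs hd h he).trans c
  · exact comm_recenter_of_adj_of_notMem hs hd h he

lemma comm_recenter (hs : FullSupport m n s) (hd : s.u = s.v) (y : Vtx m n) :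
    Comm m n s (s.recenter hd y) := by
  induction honeyAdj_reflTransGen s.u y with
  | refl => rw [s.recenter_self hd]; exact .refl s
  | tail _ hzy ih => exact ih.trans (comm_recenter_of_adj (s := s.recenter hd _) hs rfl hzy)

end FullSupport

section Canonical

variable [NeZero m] [NeZero n]

noncomputable def distHconfig (A : Finset (Sym2 (Vtx m n))) : ℕ := (symmDiff A (Hconfig m n)).card

lemma distHconfig_symmDiff_singleton_lt {A : Finset (Sym2 (Vtx m n))} {e : Sym2 (Vtx m n)}
    (he : e ∈ symmDiff A (Hconfig m n)) : distHconfig (symmDiff A {e}) < distHconfig A := by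
  rw [distHconfig, distHconfig, symmDiff_right_comm, Finset.symmDiff_singleton_of_mem he]
  exact Finset.card_erase_lt_of_mem he

def Improvable (s : WormState m n) : Prop :=
  ∃ t, FullSupport m n t ∧ distHconfig t.edges < distHconfig s.edges ∧ Comm m n s t

lemma Improvable.of_swap {s : WormState m n} (h : Improvable s.swap) : Improvable s :=
  let ⟨t, ht, hlt, hst⟩ := h
  ⟨t.swap, ht.swap, hlt, hst.swap⟩

variable [Fact (2 < m)]

lemma isWormState_Hconfig : IsWormState m n (Hconfig m n) 0 0 :=
  ⟨Hconfig_subset, fun x => by simp [bdeg_Hconfig]⟩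

noncomputable def hconfigState : WormState m n := ⟨(Hconfig m n, 0, 0), isWormState_Hconfig⟩

lemma exists_adj_mem_Hconfig_notMem {A : Finset (Sym2 (Vtx m n))}
    (hdeg : ∀ x, bdeg m n A x = 2) (hne : A ≠ Hconfig m n) :
    ∃ x w, HoneyAdj m n x w ∧ s(x, w) ∈ Hconfig m n ∧ s(x, w) ∉ A := by
  obtain ⟨e, he⟩ : (symmDiff A (Hconfig m n)).Nonempty := by
    rw [Finset.nonempty_iff_ne_empty, ← Finset.bot_eq_empty, Ne, symmDiff_eq_bot]
    exact hne
  rcases Finset.mem_symmDiff.mp he with ⟨heA, heH⟩ | ⟨heH, heA⟩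
  · induction e using Sym2.ind with | _ x y => ?_
    have hlt : bdeg m n (A ∩ Hconfig m n) x < bdeg m n (Hconfig m n) x := by
      rw [bdeg_Hconfig, ← hdeg x]
      refine Finset.card_lt_card ((Finset.ssubset_iff_of_subset ?_).mpr ⟨s(x, y), ?_, ?_⟩)
      · exact Finset.filter_subset_filter _ Finset.inter_subset_left
      · exact Finset.mem_filter.mpr ⟨heA, Sym2.mem_mk_left _ _⟩
      · simp [heH]
    obtain ⟨w, hxw, hwH, hwA⟩ := exists_adj_mem_sdiff Hconfig_subset hlt
    exact ⟨x, w, hxw, hwH, fun hw => hwA (Finset.mem_inter.mpr ⟨hw, hwH⟩)⟩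
  · obtain ⟨p, -, rfl⟩ := Finset.mem_image.mp heH
    exact ⟨p, (p.1 + 1, p.2), Or.inl ⟨rfl, Or.inl rfl⟩, heH, heA⟩

variable [Fact (Even n)] {s : WormState m n}

lemma improvable_of_bdeg_u_eq_one (hs : FullSupport m n s) (hd : bdeg m n s.edges s.u = 1) :
    Improvable s := by
  obtain ⟨w, h, hwH, hwA⟩ := exists_adj_mem_sdiff (A := s.edges) (x := s.u) Hconfig_subset
    (by rw [hd, bdeg_Hconfig]; norm_num)
  exact ⟨s.moveU w h, hs.moveU h fun h' => absurd h' hwA,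
    distHconfig_symmDiff_singleton_lt (Finset.mem_symmDiff.mpr (Or.inr ⟨hwH, hwA⟩)),
    comm_moveU_of_notMem hs h hwA⟩

lemma improvable_of_bdeg_eq_three (hs : FullSupport m n s) (huv : s.u ≠ s.v)
    (hdu : bdeg m n s.edges s.u = 3) (hdv : bdeg m n s.edges s.v = 3) : Improvable s := by
  obtain ⟨w, h, hwA, hwH⟩ := exists_adj_mem_sdiff (A := Hconfig m n) (x := s.u) s.2.1
    (by rw [hdu, bdeg_Hconfig]; norm_num)
  have hdw : 2 ≤ bdeg m n s.edges w := by
    by_cases hwv : w = s.v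
    · rw [hwv, hdv]; norm_num
    · rw [hs.bdeg_eq_two (Or.inr ⟨h.ne.symm, hwv⟩)]
  exact ⟨s.moveU w h, hs.moveU h fun _ => ⟨by rw [hdu]; norm_num, hdw⟩,
    distHconfig_symmDiff_singleton_lt (Finset.mem_symmDiff.mpr (Or.inl ⟨hwA, hwH⟩)),
    comm_moveU_of_bdeg_eq_three hs h huv hdu⟩

lemma exists_comm_diagonal (hs : FullSupport m n s) :
    ∃ t, FullSupport m n t ∧ t.u = t.v ∧ distHconfig t.edges ≤ distHconfig s.edges ∧
      Comm m n s t := by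
  induction hN : distHconfig s.edges using Nat.strong_induction_on generalizing s with
  | _ N ih =>
    by_cases huv : s.u = s.v
    · exact ⟨s, hs, huv, hN.le, .refl s⟩
    obtain ⟨t, ht, hlt, hst⟩ : Improvable s := by
      rcases s.bdeg_eq_one_or_three huv (Or.inl rfl) with hu | hu
      · exact improvable_of_bdeg_u_eq_one hs hu
      rcases s.bdeg_eq_one_or_three huv (Or.inr rfl) with hv | hv
      · exact .of_swap (improvable_of_bdeg_u_eq_one hs.swap hv)
      · exact improvable_of_bdeg_eq_three hs huv hu hv
    obtain ⟨r, hr, hrd, hrt, htr⟩ := ih _ (hN ▸ hlt) ht rfl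
    exact ⟨r, hr, hrd, by omega, hst.trans htr⟩

lemma comm_hconfigState (hs : FullSupport m n s) : Comm m n s hconfigState := by
  induction hN : distHconfig s.edges using Nat.strong_induction_on generalizing s with
  | _ N ih =>
    obtain ⟨t, ht, htd, hts, hst⟩ := exists_comm_diagonal hs
    refine hst.trans ?_
    by_cases hH : t.edges = Hconfig m n
    · have hend : t.recenter htd 0 = hconfigState := Subtype.ext (Prod.ext hH rfl)
      exact hend ▸ comm_recenter ht htd 0
    obtain ⟨x, w, h, hwH, hwA⟩ :=
      exists_adj_mem_Hconfig_notMem (fun x => ht.bdeg_eq_two (Or.inl htd)) hH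
    have hr : FullSupport m n (t.recenter htd x) := ht
    have hlt : distHconfig ((t.recenter htd x).moveU w h).edges < N :=
      hN ▸ hts.trans_lt'
        (distHconfig_symmDiff_singleton_lt (Finset.mem_symmDiff.mpr (Or.inr ⟨hwH, hwA⟩)))
    exact (comm_recenter ht htd x).trans ((comm_moveU_of_notMem hr h hwA).trans
      (ih _ hlt (hr.moveU h fun h' => absurd h' hwA) rfl))

end Canonical

theorem irreducible_prop_general (m n : ℕ) [NeZero m] [NeZero n]
    (hn : Even n) (hm4 : 4 ≤ m)
    (st tt : WormState m n) (hst : FullSupport m n st) (htt : FullSupport m n tt) :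
    Comm m n st tt := by
  have : Fact (2 < m) := ⟨by omega⟩
  have : Fact (Even n) := ⟨hn⟩
  exact (comm_hconfigState hst).trans (comm_hconfigState htt).symm

theorem irreducible_prop (m n : ℕ) [NeZero m] [NeZero n]
    (hm : Even m) (hn : Even n) (hm4 : 4 ≤ m) (hn4 : 4 ≤ n)
    (st tt : WormState m n) (hst : FullSupport m n st) (htt : FullSupport m n tt) :
    Comm m n st tt :=
  irreducible_prop_general m n hn hm4 st tt hst htt

end FPL
end
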